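/- arXiv:2406.02400 — 12 statements merged into one kernel-verified Lean document; each statement's English description precedes it below -/
import Mathlib

section
/- Let (N∪C, d) be a pseudo-metric space with agent set N of size n and two alternatives a, b. Suppose a subset A ⊆ N of size k satisfies: d(i,a)=3−ε and d(i,b)=3 for all i∈A, and d(i,a)=5−ε and d(i,b)=1 for all i∈N∖A, with d(a,b)=4−ε and all pairwise agent distances equal to 2 (for 0<ε<1). Then these distances satisfy the triangle inequality, alternative a minimizes total distance to A, and the ratio SC(a)/SC(b) of total distances to all of N satisfies SC(a)/SC(b) ≥ 5 − 12k/(n+2k) − ε. -/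
/-!
Off the panel every agent is at distance `1` from `b` and `5 - ε` from `a`, while on the
panel `a` beats `b` by `ε`. Hence `SC(a) = (5 - ε)n - 2k` and `SC(b) = n + 2k`, and the
ratio equals `5 - 12k/(n + 2k) - ε + 2εk/(n + 2k)`. The triangle inequality is a finite
check on the four kinds of points (panel agent, other agent, `a`, `b`).
-/

open Finset

lemma sum_ite_mem_univ {α : Type*} [Fintype α] [DecidableEq α] (A : Finset α) (x y : ℝ) :
    ∑ i, (if i ∈ A then x else y) = Fintype.card α * y + #A * (x - y) := by
  have h : ∀ i, (if i ∈ A then x else y) = y + if i ∈ A then x - y else 0 := fun i => by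
    split_ifs <;> ring
  simp only [h, sum_add_distrib, sum_ite_mem, univ_inter, sum_const, card_univ, nsmul_eq_mul]

lemma social_cost_ratio_eq (n k ε : ℝ) (h : n + 2 * k ≠ 0) :
    ((5 - ε) * n - 2 * k) / (n + 2 * k) =
      5 - 12 * k / (n + 2 * k) - ε + 2 * ε * k / (n + 2 * k) := by
  field_simp
  ring

section LowerBoundInstance

variable {α : Type*} [DecidableEq α] (A : Finset α) (ε : ℝ)

def agentAltDist (i : α) (c : Fin 2) : ℝ :=
  if c = 0 then (if i ∈ A then 3 - ε else 5 - ε) else (if i ∈ A then 3 else 1)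

def lowerBoundDist : α ⊕ Fin 2 → α ⊕ Fin 2 → ℝ
  | .inl i, .inl j => if i = j then 0 else 2
  | .inl i, .inr c => agentAltDist A ε i c
  | .inr c, .inl i => agentAltDist A ε i c
  | .inr c, .inr c' => if c = c' then 0 else 4 - ε

variable {A ε}

theorem lowerBoundDist_triangle (hε : ε ≤ 2) (x y z : α ⊕ Fin 2) :
    lowerBoundDist A ε x y ≤ lowerBoundDist A ε x z + lowerBoundDist A ε z y := by
  rcases x with i | cx <;> rcases y with j | cy <;> rcases z with l | cz <;>
    simp only [lowerBoundDist, agentAltDist] <;>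
    (try fin_cases cx) <;> (try fin_cases cy) <;> (try fin_cases cz) <;>
    split_ifs <;> subst_vars <;> first | linarith | contradiction

theorem eq_lowerBoundDist {d : α ⊕ Fin 2 → α ⊕ Fin 2 → ℝ}
    (hd_agents : ∀ i j : α, d (.inl i) (.inl j) = if i = j then 0 else 2)
    (hd_a : ∀ i : α,
      d (.inl i) (.inr 0) = (if i ∈ A then 3 - ε else 5 - ε) ∧
      d (.inr 0) (.inl i) = (if i ∈ A then 3 - ε else 5 - ε))
    (hd_b : ∀ i : α,
      d (.inl i) (.inr 1) = (if i ∈ A then 3 else 1) ∧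
      d (.inr 1) (.inl i) = (if i ∈ A then 3 else 1))
    (hd_alt : ∀ c c' : Fin 2, d (.inr c) (.inr c') = if c = c' then 0 else 4 - ε) :
    d = lowerBoundDist A ε := by
  funext x y
  rcases x with i | c <;> rcases y with j | c' <;> (try fin_cases c) <;> (try fin_cases c') <;>
    simp [lowerBoundDist, agentAltDist, hd_agents, hd_a, hd_b, hd_alt]

theorem sum_lowerBoundDist_inr_zero [Fintype α] :
    ∑ i, lowerBoundDist A ε (.inl i) (.inr 0) = (5 - ε) * Fintype.card α - 2 * #A := by
  simp only [lowerBoundDist, agentAltDist, if_true, sum_ite_mem_univ]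
  ring

theorem sum_lowerBoundDist_inr_one [Fintype α] :
    ∑ i, lowerBoundDist A ε (.inl i) (.inr 1) = Fintype.card α + 2 * #A := by
  simp only [lowerBoundDist, agentAltDist, one_ne_zero, if_false, sum_ite_mem_univ]
  ring

end LowerBoundInstance

theorem stmt_0_general (n k : ℕ) (hn : 0 < n)
    (ε : ℝ) (hε0 : 0 < ε) (hε1 : ε < 1)
    (A : Finset (Fin n)) (hA : A.card = k)
    (d : (Fin n ⊕ Fin 2) → (Fin n ⊕ Fin 2) → ℝ)
    (hd_agents : ∀ i j : Fin n, d (Sum.inl i) (Sum.inl j) = if i = j then 0 else 2)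
    (hd_a : ∀ i : Fin n,
      d (Sum.inl i) (Sum.inr 0) = (if i ∈ A then 3 - ε else 5 - ε) ∧
      d (Sum.inr 0) (Sum.inl i) = (if i ∈ A then 3 - ε else 5 - ε))
    (hd_b : ∀ i : Fin n,
      d (Sum.inl i) (Sum.inr 1) = (if i ∈ A then 3 else 1) ∧
      d (Sum.inr 1) (Sum.inl i) = (if i ∈ A then 3 else 1))
    (hd_alt : ∀ c c' : Fin 2,
      d (Sum.inr c) (Sum.inr c') = if c = c' then 0 else 4 - ε) :
    (∀ x y z, d x y ≤ d x z + d z y) ∧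
    (∑ i ∈ A, d (Sum.inl i) (Sum.inr 0) ≤ ∑ i ∈ A, d (Sum.inl i) (Sum.inr 1)) ∧
    ((∑ i : Fin n, d (Sum.inl i) (Sum.inr 0)) /
        (∑ i : Fin n, d (Sum.inl i) (Sum.inr 1)) ≥
      5 - 12 * (k : ℝ) / ((n : ℝ) + 2 * k) - ε) := by
  obtain rfl := eq_lowerBoundDist hd_agents hd_a hd_b hd_alt
  refine ⟨lowerBoundDist_triangle (by linarith), sum_le_sum fun i hi => ?_, ?_⟩
  · simp only [lowerBoundDist, agentAltDist, if_true, one_ne_zero, if_false, hi]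
    linarith
  · have hpos : (0 : ℝ) < n + 2 * k := by positivity
    rw [sum_lowerBoundDist_inr_zero, sum_lowerBoundDist_inr_one, Fintype.card_fin, hA,
      social_cost_ratio_eq _ _ _ hpos.ne']
    have : 0 ≤ 2 * ε * k / (n + 2 * k) := by positivity
    linarith

/-- lower bound instance for deterministic selection: agents
`Fin n`, alternatives `a = Sum.inr 0`, `b = Sum.inr 1`, panel `A` of size `k`,
with `d(i,a) = 3−ε`, `d(i,b) = 3` for `i ∈ A`, `d(i,a) = 5−ε`, `d(i,b) = 1`
for `i ∉ A`, `d(a,b) = 4−ε`, and pairwise agent distances `2`. These distances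
satisfy the triangle inequality, `a` minimizes the total distance to the panel
`A`, and `SC(a)/SC(b) ≥ 5 − 12k/(n+2k) − ε`. -/
theorem stmt_0 (n k : ℕ) (hn : 0 < n) (hkn : k ≤ n)
    (ε : ℝ) (hε0 : 0 < ε) (hε1 : ε < 1)
    (A : Finset (Fin n)) (hA : A.card = k)
    (d : (Fin n ⊕ Fin 2) → (Fin n ⊕ Fin 2) → ℝ)
    (hd_agents : ∀ i j : Fin n, d (Sum.inl i) (Sum.inl j) = if i = j then 0 else 2)
    (hd_a : ∀ i : Fin n,
      d (Sum.inl i) (Sum.inr 0) = (if i ∈ A then 3 - ε else 5 - ε) ∧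
      d (Sum.inr 0) (Sum.inl i) = (if i ∈ A then 3 - ε else 5 - ε))
    (hd_b : ∀ i : Fin n,
      d (Sum.inl i) (Sum.inr 1) = (if i ∈ A then 3 else 1) ∧
      d (Sum.inr 1) (Sum.inl i) = (if i ∈ A then 3 else 1))
    (hd_alt : ∀ c c' : Fin 2,
      d (Sum.inr c) (Sum.inr c') = if c = c' then 0 else 4 - ε) :
    (∀ x y z, d x y ≤ d x z + d z y) ∧
    (∑ i ∈ A, d (Sum.inl i) (Sum.inr 0) ≤ ∑ i ∈ A, d (Sum.inl i) (Sum.inr 1)) ∧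
    ((∑ i : Fin n, d (Sum.inl i) (Sum.inr 0)) /
        (∑ i : Fin n, d (Sum.inl i) (Sum.inr 1)) ≥
      5 - 12 * (k : ℝ) / ((n : ℝ) + 2 * k) - ε) :=
  stmt_0_general n k hn ε hε0 hε1 A hA d hd_agents hd_a hd_b hd_alt
end

section
/- Let d be a pseudo-metric on N ∪ C with |N| = n, let P ⊆ N be any subset of size k, let c' ∈ C be any alternative, and let c(P) ∈ C minimize SC(P,·). Then SC(c(P)) ≤ SC(c') + 2·((n−k)/k)·SC(P,c'), where SC(c) = Σ_{i∈N} d(i,c) and SC(P,c) = Σ_{i∈P} d(i,c). -/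
/-!
Triangulating through each agent `j ∈ P` gives `k · d(c', c(P)) ≤ SC(P, c') + SC(P, c(P))`,
which is at most `2 · SC(P, c')` by minimality of `c(P)`. Each of the `n − k` agents outside `P`
then pays at most `d(c', c(P))` more for `c(P)` than for `c'`, while agents in `P` pay no more
in total, again by minimality.
-/

open Finset

section DistanceSums

variable {V : Type*} (d : V → V → ℝ)

theorem sum_le_sum_add_card_mul (htri : ∀ x y z, d x z ≤ d x y + d y z) (s : Finset V)
    (a b : V) : ∑ i ∈ s, d i b ≤ ∑ i ∈ s, d i a + #s * d a b := by
  calc ∑ i ∈ s, d i b ≤ ∑ i ∈ s, (d i a + d a b) := sum_le_sum fun i _ => htri i a b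
    _ = ∑ i ∈ s, d i a + #s * d a b := by rw [sum_add_distrib, sum_const, nsmul_eq_mul]

theorem card_mul_le_sum_add_sum (hsymm : ∀ x y, d x y = d y x)
    (htri : ∀ x y z, d x z ≤ d x y + d y z) (s : Finset V) (a b : V) :
    #s * d a b ≤ ∑ i ∈ s, d i a + ∑ i ∈ s, d i b := by
  calc (#s : ℝ) * d a b = ∑ _i ∈ s, d a b := by rw [sum_const, nsmul_eq_mul]
    _ ≤ ∑ i ∈ s, (d i a + d i b) := sum_le_sum fun i _ => hsymm i a ▸ htri a i b
    _ = ∑ i ∈ s, d i a + ∑ i ∈ s, d i b := sum_add_distrib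

theorem card_mul_le_two_mul_sum_of_sum_le (hsymm : ∀ x y, d x y = d y x)
    (htri : ∀ x y z, d x z ≤ d x y + d y z) (s : Finset V) {a b : V}
    (hb : ∑ i ∈ s, d i b ≤ ∑ i ∈ s, d i a) : #s * d a b ≤ 2 * ∑ i ∈ s, d i a := by
  linarith [card_mul_le_sum_add_sum d hsymm htri s a b]

end DistanceSums

theorem stmt_1_general {V : Type*} (d : V → V → ℝ)
    (hsymm : ∀ x y, d x y = d y x)
    (htri : ∀ x y z, d x z ≤ d x y + d y z)
    (N C : Finset V) (n k : ℕ) (hn : N.card = n) (hk : 0 < k)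
    (P : Finset V) (hPN : P ⊆ N) (hPcard : P.card = k)
    (c' : V) (hc' : c' ∈ C)
    (cP : V)
    (hmin : ∀ c ∈ C, ∑ i ∈ P, d i cP ≤ ∑ i ∈ P, d i c) :
    ∑ i ∈ N, d i cP ≤
      (∑ i ∈ N, d i c') + 2 * (((n : ℝ) - k) / k) * ∑ i ∈ P, d i c' := by
  classical
  have hkn : k ≤ n := hn ▸ hPcard ▸ card_le_card hPN
  have hk' : (0 : ℝ) < k := by exact_mod_cast hk
  have hnk : (0 : ℝ) ≤ n - k := sub_nonneg.mpr (by exact_mod_cast hkn)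
  have hcard : ((N \ P).card : ℝ) = n - k := by
    rw [card_sdiff_of_subset hPN, hn, hPcard, Nat.cast_sub hkn]
  have hP : ∑ i ∈ P, d i cP ≤ ∑ i ∈ P, d i c' := hmin c' hc'
  have hfar : k * d c' cP ≤ 2 * ∑ i ∈ P, d i c' :=
    hPcard ▸ card_mul_le_two_mul_sum_of_sum_le d hsymm htri P hP
  have hout := sum_le_sum_add_card_mul d htri (N \ P) c' cP
  have hgap : ((n : ℝ) - k) * d c' cP ≤ 2 * (((n : ℝ) - k) / k) * ∑ i ∈ P, d i c' := by
    calc ((n : ℝ) - k) * d c' cP = ((n : ℝ) - k) / k * (k * d c' cP) := by field_simp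
      _ ≤ ((n : ℝ) - k) / k * (2 * ∑ i ∈ P, d i c') := by gcongr
      _ = 2 * (((n : ℝ) - k) / k) * ∑ i ∈ P, d i c' := by ring
  rw [← sum_sdiff hPN, ← sum_sdiff hPN (f := fun i => d i c')]
  rw [hcard] at hout
  linarith

/-- For a pseudo-metric `d` on agents and alternatives, a panel `P ⊆ N`
of size `k`, any alternative `c' ∈ C`, and `cP` minimizing `SC(P,·)` over `C`:
`SC(cP) ≤ SC(c') + 2·((n−k)/k)·SC(P,c')`. -/
theorem stmt_1 {V : Type*} [DecidableEq V] (d : V → V → ℝ)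
    (hsymm : ∀ x y, d x y = d y x)
    (htri : ∀ x y z, d x z ≤ d x y + d y z)
    (hnonneg : ∀ x y, 0 ≤ d x y)
    (N C : Finset V) (n k : ℕ) (hn : N.card = n) (hk : 0 < k)
    (P : Finset V) (hPN : P ⊆ N) (hPcard : P.card = k)
    (c' : V) (hc' : c' ∈ C)
    (cP : V) (hcPC : cP ∈ C)
    (hmin : ∀ c ∈ C, ∑ i ∈ P, d i cP ≤ ∑ i ∈ P, d i c) :
    ∑ i ∈ N, d i cP ≤
      (∑ i ∈ N, d i c') + 2 * (((n : ℝ) - k) / k) * ∑ i ∈ P, d i c' :=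
  stmt_1_general d hsymm htri N C n k hn hk P hPN hPcard c' hc' cP hmin
end

section
/- Let d be a pseudo-metric on N ∪ C, P ⊆ N a nonempty set of k agents, c' ∈ C an alternative, and c(P) an alternative minimizing SC(P,·) over C. Then d(c', c(P)) ≤ (2/k)·SC(P, c'), where SC(P,c) = Σ_{i∈P} d(i,c). -/
/-- `d(c', c(P)) ≤ (2/k)·SC(P, c')` where `c(P)` minimizes
`SC(P,·) = Σ_{i∈P} d(i,·)` over the alternatives `C`, and `P` is a nonempty
set of `k` agents. -/
theorem stmt_2 {V : Type*} [DecidableEq V] (d : V → V → ℝ)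
    (hsymm : ∀ x y, d x y = d y x)
    (htri : ∀ x y z, d x z ≤ d x y + d y z)
    (hnonneg : ∀ x y, 0 ≤ d x y)
    (N C : Finset V) (k : ℕ) (hk : 0 < k)
    (P : Finset V) (hPN : P ⊆ N) (hPcard : P.card = k)
    (c' : V) (hc' : c' ∈ C)
    (cP : V) (hcPC : cP ∈ C)
    (hmin : ∀ c ∈ C, ∑ i ∈ P, d i cP ≤ ∑ i ∈ P, d i c) :
    d c' cP ≤ (2 / (k : ℝ)) * ∑ i ∈ P, d i c' := by
  have hk' : (0:ℝ) < k := by exact_mod_cast hk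
  rw [div_mul_eq_mul_div, le_div_iff₀ hk', mul_comm]
  have h1 : (k:ℝ) * d c' cP = ∑ i ∈ P, d c' cP := by
    rw [Finset.sum_const, hPcard, nsmul_eq_mul]
  rw [h1]
  have h2 : ∑ i ∈ P, d c' cP ≤ (∑ i ∈ P, d i c') + ∑ i ∈ P, d i cP := by
    rw [← Finset.sum_add_distrib]
    apply Finset.sum_le_sum
    intro i _
    calc d c' cP ≤ d c' i + d i cP := htri c' i cP
    _ = d i c' + d i cP := by rw [hsymm c' i]
  calc ∑ i ∈ P, d c' cP ≤ (∑ i ∈ P, d i c') + ∑ i ∈ P, d i cP := h2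
  _ ≤ (∑ i ∈ P, d i c') + ∑ i ∈ P, d i c' := by
      have := hmin c' hc'
      linarith
  _ = 2 * ∑ i ∈ P, d i c' := by ring
end

section
/- Let A be a random variable taking values in the k-element subsets of N = [n] such that Pr[i ∈ A] = k/n for every agent i (a fair selection). Let d be a pseudo-metric on N ∪ C, let c' ∈ C, and for each k-set P let c(P) minimize SC(P,·). Then E[SC(c(A))] ≤ (3 − 2k/n)·SC(c'), where SC(c) = Σ_{i∈N} d(i,c). In particular, the ex-ante distortion of any fair selection algorithm is at most 3 − 2k/n. -/
/-!
Fix a panel `P` of size `k` with optimal alternative `c = c(P)`. Routing every panel member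
through `c'` and `c` shows `k · d(c', c) ≤ 2 · SC(P, c')`; routing every non-member through `c'`
then gives `k · SC(c) ≤ k · SC(c') + 2 (n - k) · SC(P, c')`. Averaging over a fair panel turns
`SC(P, c')` into `(k/n) · SC(c')`, and the bound becomes `(1 + 2 (n - k)/n) · SC(c')`.
-/

open Finset

section PseudoMetric

variable {V : Type*} (d : V → V → ℝ)

theorem card_mul_dist_le_of_sum_le (hsymm : ∀ x y, d x y = d y x)
    (htri : ∀ x y z, d x z ≤ d x y + d y z) {P : Finset V} {c c' : V}
    (hc : ∑ i ∈ P, d i c ≤ ∑ i ∈ P, d i c') :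
    #P * d c' c ≤ 2 * ∑ i ∈ P, d i c' :=
  calc (#P : ℝ) * d c' c = ∑ i ∈ P, d c' c := by rw [sum_const, nsmul_eq_mul]
    _ ≤ ∑ i ∈ P, (d i c' + d i c) :=
        sum_le_sum fun i _ => hsymm c' i ▸ htri c' i c
    _ ≤ 2 * ∑ i ∈ P, d i c' := by rw [sum_add_distrib]; linarith

theorem card_mul_sum_le_of_sum_le [DecidableEq V] (hsymm : ∀ x y, d x y = d y x)
    (htri : ∀ x y z, d x z ≤ d x y + d y z) {N P : Finset V} (hPN : P ⊆ N) {c c' : V}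
    (hc : ∑ i ∈ P, d i c ≤ ∑ i ∈ P, d i c') :
    #P * ∑ i ∈ N, d i c ≤ #P * ∑ i ∈ N, d i c' + 2 * #(N \ P) * ∑ i ∈ P, d i c' := by
  have hsum : ∑ i ∈ N, d i c ≤ ∑ i ∈ N, d i c' + #(N \ P) * d c' c :=
    calc ∑ i ∈ N, d i c = ∑ i ∈ N \ P, d i c + ∑ i ∈ P, d i c := (sum_sdiff hPN).symm
      _ ≤ ∑ i ∈ N \ P, (d i c' + d c' c) + ∑ i ∈ P, d i c' :=
          add_le_add (sum_le_sum fun i _ => htri i c' c) hc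
      _ = ∑ i ∈ N, d i c' + #(N \ P) * d c' c := by
          rw [sum_add_distrib, sum_const, nsmul_eq_mul, ← sum_sdiff hPN (f := fun i => d i c')]
          ring
  have hdist := mul_le_mul_of_nonneg_left (card_mul_dist_le_of_sum_le d hsymm htri hc)
    (Nat.cast_nonneg #(N \ P))
  linarith [mul_le_mul_of_nonneg_left hsum (Nat.cast_nonneg (α := ℝ) #P)]

end PseudoMetric

theorem sum_mul_sum_eq_of_marginal {ι : Type*} [DecidableEq ι] {N : Finset ι}
    {𝒜 : Finset (Finset ι)} (h𝒜 : ∀ P ∈ 𝒜, P ⊆ N) (p : Finset ι → ℝ) {q : ℝ}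
    (hq : ∀ i ∈ N, ∑ P ∈ 𝒜.filter (fun P => i ∈ P), p P = q) (f : ι → ℝ) :
    ∑ P ∈ 𝒜, p P * ∑ i ∈ P, f i = q * ∑ i ∈ N, f i := by
  have hswap : ∑ P ∈ 𝒜, ∑ i ∈ P, p P * f i = ∑ i ∈ N, ∑ P ∈ 𝒜.filter (fun P => i ∈ P), p P * f i :=
    sum_comm' fun P i => by
      simp only [mem_filter]
      exact ⟨fun ⟨hP, hi⟩ => ⟨⟨hP, hi⟩, h𝒜 P hP hi⟩, fun ⟨hPi, _⟩ => hPi⟩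
  simp_rw [mul_sum, hswap, ← sum_mul]
  exact sum_congr rfl fun i hi => by rw [hq i hi]

theorem stmt_3_general {V : Type*} [DecidableEq V] (d : V → V → ℝ)
    (hsymm : ∀ x y, d x y = d y x)
    (htri : ∀ x y z, d x z ≤ d x y + d y z)
    (N C : Finset V) (n k : ℕ) (hn : N.card = n) (hkpos : 0 < k) (hkn : k ≤ n)
    (p : Finset V → ℝ) (hp0 : ∀ P, 0 ≤ p P)
    (hpsum : ∑ P ∈ N.powersetCard k, p P = 1)
    (hfair : ∀ i ∈ N,
      ∑ P ∈ (N.powersetCard k).filter (fun P => i ∈ P), p P = (k : ℝ) / n)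
    (cP : Finset V → V)
    (hsel : ∀ P ∈ N.powersetCard k,
      cP P ∈ C ∧ ∀ c ∈ C, ∑ i ∈ P, d i (cP P) ≤ ∑ i ∈ P, d i c)
    (c' : V) (hc' : c' ∈ C) :
    ∑ P ∈ N.powersetCard k, p P * ∑ i ∈ N, d i (cP P) ≤
      (3 - 2 * (k : ℝ) / n) * ∑ i ∈ N, d i c' := by
  have hk : (0 : ℝ) < k := Nat.cast_pos.mpr hkpos
  have hn0 : (n : ℝ) ≠ 0 := Nat.cast_ne_zero.mpr (by omega)
  set A := ∑ i ∈ N, d i c'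
  have hpanel : ∀ P ∈ N.powersetCard k, p P * (k * ∑ i ∈ N, d i (cP P)) ≤
      p P * (k * A + 2 * (n - k) * ∑ i ∈ P, d i c') := by
    intro P hP
    obtain ⟨hPN, hPk⟩ := mem_powersetCard.mp hP
    have hout : (#(N \ P) : ℝ) = n - k := by
      rw [card_sdiff_of_subset hPN, hn, hPk, Nat.cast_sub hkn]
    have := card_mul_sum_le_of_sum_le d hsymm htri hPN ((hsel P hP).2 c' hc')
    rw [hPk, hout] at this
    exact mul_le_mul_of_nonneg_left this (hp0 P)
  have hmarginal := sum_mul_sum_eq_of_marginal (fun P hP => (mem_powersetCard.mp hP).1) p hfair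
    (fun i => d i c')
  refine le_of_mul_le_mul_left ?_ hk
  calc (k : ℝ) * ∑ P ∈ N.powersetCard k, p P * ∑ i ∈ N, d i (cP P)
      = ∑ P ∈ N.powersetCard k, p P * (k * ∑ i ∈ N, d i (cP P)) := by
        rw [mul_sum]; exact sum_congr rfl fun P _ => by ring
    _ ≤ ∑ P ∈ N.powersetCard k, p P * (k * A + 2 * (n - k) * ∑ i ∈ P, d i c') :=
        sum_le_sum hpanel
    _ = k * A * ∑ P ∈ N.powersetCard k, p P +
          2 * (n - k) * ∑ P ∈ N.powersetCard k, p P * ∑ i ∈ P, d i c' := by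
        rw [mul_sum (powersetCard k N), mul_sum (powersetCard k N), ← sum_add_distrib]
        exact sum_congr rfl fun P _ => by ring
    _ = k * ((3 - 2 * k / n) * A) := by rw [hpsum, hmarginal]; field_simp; ring

/-- Any fair selection algorithm (a distribution over `k`-subsets of
`N` putting each agent on the panel with probability `k/n`) has expected social
cost at most `(3 − 2k/n)·SC(c')` for every alternative `c'`; in particular its
ex-ante distortion is at most `3 − 2k/n`. -/
theorem stmt_3 {V : Type*} [DecidableEq V] (d : V → V → ℝ)
    (hsymm : ∀ x y, d x y = d y x)
    (htri : ∀ x y z, d x z ≤ d x y + d y z)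
    (hnonneg : ∀ x y, 0 ≤ d x y)
    (N C : Finset V) (n k : ℕ) (hn : N.card = n) (hkpos : 0 < k) (hkn : k ≤ n)
    (p : Finset V → ℝ) (hp0 : ∀ P, 0 ≤ p P)
    (hpsum : ∑ P ∈ N.powersetCard k, p P = 1)
    (hfair : ∀ i ∈ N,
      ∑ P ∈ (N.powersetCard k).filter (fun P => i ∈ P), p P = (k : ℝ) / n)
    (cP : Finset V → V)
    (hsel : ∀ P ∈ N.powersetCard k,
      cP P ∈ C ∧ ∀ c ∈ C, ∑ i ∈ P, d i (cP P) ≤ ∑ i ∈ P, d i c)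
    (c' : V) (hc' : c' ∈ C) :
    ∑ P ∈ N.powersetCard k, p P * ∑ i ∈ N, d i (cP P) ≤
      (3 - 2 * (k : ℝ) / n) * ∑ i ∈ N, d i c' :=
  stmt_3_general d hsymm htri N C n k hn hkpos hkn p hp0 hpsum hfair cP hsel c' hc'
end

section
/- Let d be a pseudo-metric on N ∪ C, let a, c' ∈ C with D = d(a,c') > 0, and let L = {i ∈ N : d(i,c') > D/4}. Let P be a set of k agents with k divisible by 3 and |L ∩ P| < k/3. Then Σ_{i∈P} d(i,a) > Σ_{i∈P} d(i,c'); in particular a does not minimize SC(P,·) when c' is available. -/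
/-! Moving from `a` to `c'` costs an agent at most `D` by the triangle inequality, while an agent
within `D/4` of `c'` gains at least `D - 2·D/4 = D/2`. Fewer than a third of the panel lie in `L`,
so the gains of the other two thirds outweigh the losses. -/

open Finset

section PseudoMetric

variable {V : Type*} {d : V → V → ℝ}

lemma neg_dist_le_sub_dist (htri : ∀ x y z, d x z ≤ d x y + d y z) (i a c : V) :
    -d a c ≤ d i a - d i c := by
  linarith [htri i a c]

lemma dist_sub_two_mul_le_sub_dist (hsymm : ∀ x y, d x y = d y x)
    (htri : ∀ x y z, d x z ≤ d x y + d y z) (i a c : V) :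
    d a c - 2 * d i c ≤ d i a - d i c := by
  linarith [htri a i c, hsymm a i]

end PseudoMetric

lemma sum_pos_of_card_mul_three_lt {ι : Type*} [DecidableEq ι] (P S : Finset ι) (f : ι → ℝ)
    {D : ℝ} (hD : 0 < D) (hS : ∀ i ∈ P ∩ S, -D ≤ f i) (hnotS : ∀ i ∈ P \ S, D / 2 ≤ f i)
    (hcard : 3 * #(P ∩ S) < #P) :
    0 < ∑ i ∈ P, f i := by
  have hsplit : #(P \ S) + #(P ∩ S) = #P := card_sdiff_add_card_inter P S
  have hlow : #(P ∩ S) • -D ≤ ∑ i ∈ P ∩ S, f i := card_nsmul_le_sum _ _ _ hS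
  have hhigh : #(P \ S) • (D / 2) ≤ ∑ i ∈ P \ S, f i := card_nsmul_le_sum _ _ _ hnotS
  have hcard' : 3 * (#(P ∩ S) : ℝ) + 1 ≤ #(P \ S) + #(P ∩ S) := by exact_mod_cast hsplit ▸ hcard
  rw [nsmul_eq_mul] at hlow hhigh
  rw [← sum_inter_add_sum_sdiff P S]
  nlinarith

theorem stmt_6_general {V : Type*} [DecidableEq V] (d : V → V → ℝ)
    (hsymm : ∀ x y, d x y = d y x)
    (htri : ∀ x y z, d x z ≤ d x y + d y z)
    (N C : Finset V) (a c' : V) (D : ℝ) (hD : D = d a c') (hDpos : 0 < D)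
    (L : Finset V) (hL : L = N.filter (fun i => d i c' > D / 4))
    (k : ℕ)
    (P : Finset V) (hPN : P ⊆ N) (hPcard : P.card = k)
    (hLP : ((L ∩ P).card : ℝ) < (k : ℝ) / 3) :
    (∑ i ∈ P, d i a > ∑ i ∈ P, d i c') ∧
    (a ∈ C → c' ∈ C → ¬ (∀ c ∈ C, ∑ i ∈ P, d i a ≤ ∑ i ∈ P, d i c)) := by
  subst hD hL
  have hcard : 3 * #(P ∩ N.filter (fun i => d i c' > d a c' / 4)) < #P := by
    rw [inter_comm, hPcard]
    exact_mod_cast (by linarith : 3 * (#(N.filter (fun i => d i c' > d a c' / 4) ∩ P) : ℝ) < k)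
  have hnear : ∀ i ∈ P \ N.filter (fun i => d i c' > d a c' / 4), d a c' / 2 ≤ d i a - d i c' := by
    intro i hi
    have hclose : d i c' ≤ d a c' / 4 := by
      simp only [mem_sdiff, mem_filter, not_and, not_lt] at hi
      exact hi.2 (hPN hi.1)
    linarith [dist_sub_two_mul_le_sub_dist hsymm htri i a c']
  have key : ∑ i ∈ P, d i a > ∑ i ∈ P, d i c' := by
    rw [gt_iff_lt, ← sub_pos, ← sum_sub_distrib]
    exact sum_pos_of_card_mul_three_lt P _ _ hDpos
      (fun i _ => neg_dist_le_sub_dist htri i a c') hnear hcard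
  exact ⟨key, fun _ hc' hmin => (hmin c' hc').not_gt key⟩

/-- With `D = d(a,c') > 0`, `L = {i ∈ N : d(i,c') > D/4}`, and a
panel `P` of `k` agents (`3 ∣ k`) satisfying `|L ∩ P| < k/3`, we have
`Σ_{i∈P} d(i,a) > Σ_{i∈P} d(i,c')`; in particular `a` does not minimize
`SC(P,·)` over a set of alternatives containing both `a` and `c'`. -/
theorem stmt_6 {V : Type*} [DecidableEq V] (d : V → V → ℝ)
    (hsymm : ∀ x y, d x y = d y x)
    (htri : ∀ x y z, d x z ≤ d x y + d y z)
    (hnonneg : ∀ x y, 0 ≤ d x y)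
    (N C : Finset V) (a c' : V) (D : ℝ) (hD : D = d a c') (hDpos : 0 < D)
    (L : Finset V) (hL : L = N.filter (fun i => d i c' > D / 4))
    (k : ℕ) (hk3 : 3 ∣ k) (hkpos : 0 < k)
    (P : Finset V) (hPN : P ⊆ N) (hPcard : P.card = k)
    (hLP : ((L ∩ P).card : ℝ) < (k : ℝ) / 3) :
    (∑ i ∈ P, d i a > ∑ i ∈ P, d i c') ∧
    (a ∈ C → c' ∈ C → ¬ (∀ c ∈ C, ∑ i ∈ P, d i a ≤ ∑ i ∈ P, d i c)) :=
  stmt_6_general d hsymm htri N C a c' D hD hDpos L hL k P hPN hPcard hLP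
end

section
/- Let X be a hypergeometric random variable counting successes when drawing k items without replacement from a population of size n containing ℓ success states, where k is a positive multiple of 3, k/3 ≤ ℓ ≤ n, and the mode of the distribution (k+1)(ℓ+1)/(n+2) is less than k/3. Then Pr[X ≥ k/3] ≤ (2k/3 + 1)·C(k, k/3)·(ℓ/n)^{k/3} ≤ (9ℓ/n)^{k/3}. -/
/-!
Since `C(ℓ,j) C(n-ℓ,k-j) ≤ C(ℓ,j) C(n-j,k-j)` and `C(n,k) C(k,j) = C(n,j) C(n-j,k-j)`, each
hypergeometric probability satisfies `Pr[X = j] ≤ C(k,j) C(ℓ,j) / C(n,j) ≤ C(k,j) (ℓ/n)^j`.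
The mode condition forces `3ℓ < n`, and once `ℓ/n ≤ 1/2` the envelope `C(k,j) (ℓ/n)^j` decreases
on `j ≥ k/3`, so each of the `2k/3 + 1` terms of the tail is at most its value at `j = k/3`.
Finally `(2m+1) C(3m,m) ≤ 9^m` by induction on `m`.
-/

open Finset

noncomputable def hypergeomProb (n ℓ k j : ℕ) : ℝ :=
  ((ℓ.choose j : ℝ) * ((n - ℓ).choose (k - j) : ℝ)) / (n.choose k : ℝ)

namespace Nat

theorem descFactorial_mul_pow_le_pow_mul_descFactorial {ℓ n : ℕ} (h : ℓ ≤ n) (j : ℕ) :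
    ℓ.descFactorial j * n ^ j ≤ ℓ ^ j * n.descFactorial j := by
  induction j with
  | zero => simp
  | succ j ih =>
    have step : (ℓ - j) * n ≤ ℓ * (n - j) := by
      rcases le_total j ℓ with hj | hj
      · zify [hj, hj.trans h]; nlinarith
      · simp [Nat.sub_eq_zero_of_le hj]
    rw [descFactorial_succ, descFactorial_succ, pow_succ, pow_succ]
    calc (ℓ - j) * ℓ.descFactorial j * (n ^ j * n)
        = ((ℓ - j) * n) * (ℓ.descFactorial j * n ^ j) := by ring
      _ ≤ (ℓ * (n - j)) * (ℓ ^ j * n.descFactorial j) := Nat.mul_le_mul step ih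
      _ = ℓ ^ j * ℓ * ((n - j) * n.descFactorial j) := by ring

theorem choose_mul_pow_le_pow_mul_choose {ℓ n : ℕ} (h : ℓ ≤ n) (j : ℕ) :
    ℓ.choose j * n ^ j ≤ ℓ ^ j * n.choose j := by
  have := descFactorial_mul_pow_le_pow_mul_descFactorial h j
  rw [descFactorial_eq_factorial_mul_choose, descFactorial_eq_factorial_mul_choose,
    mul_assoc, mul_left_comm (ℓ ^ j)] at this
  exact Nat.le_of_mul_le_mul_left this j.factorial_pos

theorem mul_choose_three_mul_add_three (m : ℕ) :
    (m + 1) * (2 * m + 1) * (2 * m + 2) * (3 * m + 3).choose (m + 1) =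
      (3 * m + 1) * (3 * m + 2) * (3 * m + 3) * (3 * m).choose m := by
  have e1 : (3 * m + 3).choose (m + 1) * (m + 1) = (3 * m + 3) * (3 * m + 2).choose m :=
    (add_one_mul_choose_eq _ _).symm
  have e2 : (3 * m + 1).choose m * (3 * m + 2) = (3 * m + 2).choose m * (2 * m + 2) := by
    rw [choose_mul_succ_eq]; congr 2; omega
  have e3 : (3 * m).choose m * (3 * m + 1) = (3 * m + 1).choose m * (2 * m + 1) := by
    rw [choose_mul_succ_eq]; congr 2; omega
  qify at e1 e2 e3 ⊢
  linear_combination (2 * (m : ℚ) + 1) * (2 * m + 2) * e1 - (3 * (m : ℚ) + 3) * (2 * m + 1) * e2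
    - (3 * (m : ℚ) + 3) * (3 * m + 2) * e3

theorem two_mul_add_one_mul_choose_three_mul_le_nine_pow (m : ℕ) :
    (2 * m + 1) * (3 * m).choose m ≤ 9 ^ m := by
  induction m with
  | zero => simp
  | succ m ih =>
    have hrec := mul_choose_three_mul_add_three m
    have hstep : (2 * (m + 1) + 1) * (3 * (m + 1)).choose (m + 1) ≤
        9 * ((2 * m + 1) * (3 * m).choose m) := by
      refine Nat.le_of_mul_le_mul_left ?_ (by positivity : 0 < (m + 1) * (2 * m + 1) * (2 * m + 2))
      calc (m + 1) * (2 * m + 1) * (2 * m + 2) * ((2 * (m + 1) + 1) * (3 * (m + 1)).choose (m + 1))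
          = (2 * m + 3) * (3 * m + 1) * (3 * m + 2) * (3 * m + 3) * (3 * m).choose m := by
            rw [mul_add_one 3 m, mul_left_comm, hrec]; ring
        _ ≤ 9 * (2 * m + 1) * (m + 1) * (2 * m + 1) * (2 * m + 2) * (3 * m).choose m := by
            gcongr ?_ * _
            nlinarith [Nat.zero_le (m ^ 3), Nat.le_self_pow two_ne_zero m]
        _ = (m + 1) * (2 * m + 1) * (2 * m + 2) * (9 * ((2 * m + 1) * (3 * m).choose m)) := by
            ring
    calc _ ≤ 9 * ((2 * m + 1) * (3 * m).choose m) := hstep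
      _ ≤ 9 * 9 ^ m := Nat.mul_le_mul_left 9 ih
      _ = 9 ^ (m + 1) := by ring

end Nat

theorem hypergeomProb_le_choose_mul_pow {n ℓ k j : ℕ} (hn : 0 < n) (hℓn : ℓ ≤ n) (hkn : k ≤ n)
    (hjk : j ≤ k) : hypergeomProb n ℓ k j ≤ k.choose j * ((ℓ : ℝ) / n) ^ j := by
  rcases lt_or_ge ℓ j with hℓj | hjℓ
  · simp [hypergeomProb, Nat.choose_eq_zero_of_lt hℓj]
    positivity
  have hcount : ℓ.choose j * (n - ℓ).choose (k - j) * n ^ j ≤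
      k.choose j * ℓ ^ j * n.choose k :=
    calc ℓ.choose j * (n - ℓ).choose (k - j) * n ^ j
        = (ℓ.choose j * n ^ j) * (n - ℓ).choose (k - j) := by ring
      _ ≤ (ℓ ^ j * n.choose j) * (n - j).choose (k - j) :=
          Nat.mul_le_mul (Nat.choose_mul_pow_le_pow_mul_choose hℓn j)
            (Nat.choose_le_choose _ (Nat.sub_le_sub_left hjℓ n))
      _ = k.choose j * ℓ ^ j * n.choose k := by rw [mul_assoc, ← Nat.choose_mul hjk]; ring
  have hchoose : (0 : ℝ) < n.choose k := by exact_mod_cast Nat.choose_pos hkn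
  rw [hypergeomProb, div_pow, ← mul_div_assoc, div_le_div_iff₀ hchoose (by positivity)]
  exact_mod_cast hcount

theorem choose_mul_pow_antitoneOn {k m : ℕ} {x : ℝ} (hkm : k ≤ 3 * m) (hx : 0 ≤ x)
    (hx2 : 2 * x ≤ 1) : AntitoneOn (fun j ↦ (k.choose j : ℝ) * x ^ j) (Set.Ici m) := by
  refine antitoneOn_nat_Ici_of_succ_le fun j hj ↦ ?_
  have hsucc : (k.choose (j + 1) : ℝ) * (j + 1) = k.choose j * ((k - j : ℕ) : ℝ) := by
    exact_mod_cast Nat.choose_succ_right_eq k j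
  -- `j ≥ m ≥ k/3` gives `k - j ≤ 2j`, so the ratio of consecutive terms is `(k-j)x/(j+1) ≤ 1`.
  have hratio : ((k - j : ℕ) : ℝ) * x ≤ j + 1 := by
    have : ((k - j : ℕ) : ℝ) ≤ 2 * j := by exact_mod_cast (by omega : k - j ≤ 2 * j)
    nlinarith
  refine le_of_mul_le_mul_right ?_ (by positivity : (0 : ℝ) < j + 1)
  calc (k.choose (j + 1) : ℝ) * x ^ (j + 1) * (j + 1)
      = k.choose j * x ^ j * (((k - j : ℕ) : ℝ) * x) := by
        linear_combination x ^ j * x * hsucc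
    _ ≤ k.choose j * x ^ j * (j + 1) := by gcongr

theorem sum_Icc_hypergeomProb_le {n ℓ m : ℕ} (hn : 0 < n) (hℓn : 2 * ℓ ≤ n) (hmn : 3 * m ≤ n) :
    ∑ j ∈ Icc m (3 * m), hypergeomProb n ℓ (3 * m) j ≤
      (2 * m + 1) * ((3 * m).choose m : ℝ) * ((ℓ : ℝ) / n) ^ m := by
  have hx2 : 2 * ((ℓ : ℝ) / n) ≤ 1 := by
    rw [mul_div_assoc', div_le_one (by exact_mod_cast hn)]; exact_mod_cast hℓn
  have hterm : ∀ j ∈ Icc m (3 * m),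
      hypergeomProb n ℓ (3 * m) j ≤ (3 * m).choose m * ((ℓ : ℝ) / n) ^ m := by
    intro j hj
    rw [mem_Icc] at hj
    calc hypergeomProb n ℓ (3 * m) j ≤ (3 * m).choose j * ((ℓ : ℝ) / n) ^ j :=
          hypergeomProb_le_choose_mul_pow hn (by omega) hmn hj.2
      _ ≤ (3 * m).choose m * ((ℓ : ℝ) / n) ^ m :=
          choose_mul_pow_antitoneOn le_rfl (by positivity) hx2 Set.self_mem_Ici hj.1 hj.1
  calc _ ≤ #(Icc m (3 * m)) • ((3 * m).choose m * ((ℓ : ℝ) / n) ^ m) :=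
        sum_le_card_nsmul _ _ _ hterm
    _ = (2 * m + 1) * ((3 * m).choose m : ℝ) * ((ℓ : ℝ) / n) ^ m := by
        rw [Nat.card_Icc, nsmul_eq_mul, show 3 * m + 1 - m = 2 * m + 1 by omega]
        push_cast; ring

theorem stmt_7_general (n ℓ k : ℕ) (hk3 : 3 ∣ k) (hkn : k ≤ n)
    (hmode : (((k : ℝ) + 1) * ((ℓ : ℝ) + 1)) / ((n : ℝ) + 2) < (k : ℝ) / 3)
    (p : ℕ → ℝ)
    (hp : ∀ j, p j = ((ℓ.choose j : ℝ) * ((n - ℓ).choose (k - j) : ℝ)) / (n.choose k : ℝ)) :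
    (∑ j ∈ Finset.Icc (k / 3) k, p j ≤
      (2 * (k : ℝ) / 3 + 1) * (k.choose (k / 3) : ℝ) * ((ℓ : ℝ) / n) ^ (k / 3)) ∧
    ((2 * (k : ℝ) / 3 + 1) * (k.choose (k / 3) : ℝ) * ((ℓ : ℝ) / n) ^ (k / 3) ≤
      (9 * (ℓ : ℝ) / n) ^ (k / 3)) := by
  obtain ⟨m, rfl⟩ := hk3
  obtain rfl : p = hypergeomProb n ℓ (3 * m) := funext hp
  rw [Nat.mul_div_cancel_left m three_pos]
  have hℓ3 : 3 * ℓ < n := by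
    rw [div_lt_iff₀ (by positivity)] at hmode
    push_cast at hmode
    exact_mod_cast (by nlinarith : 3 * (ℓ : ℝ) < n)
  have hcoeff : 2 * ((3 * m : ℕ) : ℝ) / 3 + 1 = 2 * m + 1 := by push_cast; ring
  rw [hcoeff]
  refine ⟨sum_Icc_hypergeomProb_le (by omega) (by omega) hkn, ?_⟩
  rw [mul_div_assoc, mul_pow]
  gcongr
  exact_mod_cast Nat.two_mul_add_one_mul_choose_three_mul_le_nine_pow m

/-- For a hypergeometric variable with population `n`, `ℓ` successes
and `k` draws (`k` a positive multiple of `3`, `k/3 ≤ ℓ ≤ n`, and mode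
`(k+1)(ℓ+1)/(n+2) < k/3`), the tail satisfies
`Pr[X ≥ k/3] ≤ (2k/3+1)·C(k,k/3)·(ℓ/n)^{k/3} ≤ (9ℓ/n)^{k/3}`. -/
theorem stmt_7 (n ℓ k : ℕ) (hk3 : 3 ∣ k) (hkpos : 0 < k) (hkn : k ≤ n)
    (hℓlo : k / 3 ≤ ℓ) (hℓhi : ℓ ≤ n)
    (hmode : (((k : ℝ) + 1) * ((ℓ : ℝ) + 1)) / ((n : ℝ) + 2) < (k : ℝ) / 3)
    (p : ℕ → ℝ)
    (hp : ∀ j, p j = ((ℓ.choose j : ℝ) * ((n - ℓ).choose (k - j) : ℝ)) / (n.choose k : ℝ)) :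
    (∑ j ∈ Finset.Icc (k / 3) k, p j ≤
      (2 * (k : ℝ) / 3 + 1) * (k.choose (k / 3) : ℝ) * ((ℓ : ℝ) / n) ^ (k / 3)) ∧
    ((2 * (k : ℝ) / 3 + 1) * (k.choose (k / 3) : ℝ) * ((ℓ : ℝ) / n) ^ (k / 3) ≤
      (9 * (ℓ : ℝ) / n) ^ (k / 3)) :=
  stmt_7_general n ℓ k hk3 hkn hmode p hp
end

section
/- (Serfling's inequality, special consequence) Let c_1, …, c_n ∈ [−D, D] be real numbers and select k of them uniformly at random without replacement; let X be their sum. Then E[X] = (k/n)·Σ_i c_i and for every t > 0, Pr[X − E[X] ≥ t] ≤ exp(−2t²/(k·(2D)²)) = exp(−t²/(2kD²)). -/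
/-!
Hoeffding's reduction of sampling without replacement to sampling with replacement.
By Markov's inequality for `exp (r · _)`, the number of `k`-subsets `P` with
`∑_{i ∈ P} cᵢ - μ ≥ t` is at most `exp (-r (μ + t))` times `∑_P ∏_{i ∈ P} exp (r cᵢ)`, an
elementary symmetric function of the positive numbers `exp (r cᵢ)`. Maclaurin's inequality
bounds it by `C(n, k)` times the `k`-th power of their mean, which is what `k` independent
uniform draws would give, and Hoeffding's lemma bounds that mean by
`exp (r c̄ + r² (b - a)² / 8)`. Choosing `r = 4t / (k (b - a)²)` gives `exp (-2t² / (k (b - a)²))`.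
-/

open Real Finset MeasureTheory ProbabilityTheory

theorem sum_powersetCard_succ_insert_prod {ι : Type*} [DecidableEq ι] {b : ι} {s : Finset ι}
    (hb : b ∉ s) (x : ι → ℝ) (j : ℕ) :
    ∑ P ∈ (insert b s).powersetCard (j + 1), ∏ i ∈ P, x i =
      ∑ P ∈ s.powersetCard (j + 1), ∏ i ∈ P, x i + x b * ∑ P ∈ s.powersetCard j, ∏ i ∈ P, x i := by
  have hbP {P : Finset ι} (hP : P ∈ s.powersetCard j) : b ∉ P :=
    fun h => hb ((mem_powersetCard.1 hP).1 h)
  rw [powersetCard_succ_insert hb, sum_union, sum_image, mul_sum]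
  · exact congrArg _ (sum_congr rfl fun P hP => prod_insert (hbP hP))
  · intro P hP Q hQ hPQ
    simpa [erase_insert (hbP hP), erase_insert (hbP hQ)] using congrArg (·.erase b) hPQ
  · refine disjoint_right.2 fun P hP hP' => ?_
    obtain ⟨Q, -, rfl⟩ := mem_image.1 hP
    exact hb ((mem_powersetCard.1 hP').1 (mem_insert_self b Q))

theorem pow_succ_add_mul_pow_mul_sub_le {a v : ℝ} (ha : 0 ≤ a) (hv : 0 ≤ v) (k : ℕ) :
    a ^ (k + 1) + (k + 1) * a ^ k * (v - a) ≤ v ^ (k + 1) := by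
  induction k with
  | zero => simp
  | succ k ih =>
    have hstep : a ^ (k + 2) + (k + 2) * a ^ (k + 1) * (v - a) + (k + 1) * a ^ k * (v - a) ^ 2 =
        v * (a ^ (k + 1) + (k + 1) * a ^ k * (v - a)) := by ring
    have hsq : 0 ≤ (k + 1) * a ^ k * (v - a) ^ 2 := by positivity
    push_cast
    linarith [mul_le_mul_of_nonneg_left ih hv, pow_succ v (k + 1)]

/-- Maclaurin's inequality. Adding `b` to `s`, the step is the tangent-line bound
`pow_succ_add_mul_pow_mul_sub_le` at the old mean `a`, since `x b = (m + 1) v - m a` for the new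
mean `v`. -/
theorem sum_powersetCard_prod_le_choose_mul_pow {ι : Type*} (s : Finset ι) {x : ι → ℝ}
    (hx : ∀ i ∈ s, 0 ≤ x i) (k : ℕ) :
    ∑ P ∈ s.powersetCard k, ∏ i ∈ P, x i ≤ (#s).choose k * ((∑ i ∈ s, x i) / #s) ^ k := by
  classical
  induction s using Finset.induction_on generalizing k with
  | empty =>
    rcases k with _ | j
    · simp
    · simp [powersetCard_eq_empty.2 (by simp : #(∅ : Finset ι) < j + 1)]
  | insert b s hb ih =>
    have hxs : ∀ i ∈ s, 0 ≤ x i := fun i hi => hx i (mem_insert_of_mem hi)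
    have hxb : 0 ≤ x b := hx b (mem_insert_self b s)
    cases k with
    | zero => simp
    | succ j =>
      set m : ℕ := #s
      set a := (∑ i ∈ s, x i) / m
      set v := (x b + ∑ i ∈ s, x i) / (m + 1)
      have ha : 0 ≤ a := div_nonneg (sum_nonneg hxs) m.cast_nonneg
      have hv : 0 ≤ v := div_nonneg (add_nonneg hxb (sum_nonneg hxs)) (by positivity)
      have hma : m * a = ∑ i ∈ s, x i := by
        rcases eq_or_ne m 0 with hm | hm
        · simp [a, hm, card_eq_zero.1 hm]
        · exact mul_div_cancel₀ _ (Nat.cast_ne_zero.2 hm)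
      have hxb_eq : x b = (m + 1) * v - m * a := by
        rw [hma, mul_div_cancel₀ _ (by positivity)]
        ring
      have hpascal : ((m + 1).choose (j + 1) : ℝ) = m.choose (j + 1) + m.choose j := by
        exact_mod_cast (Nat.choose_succ_succ' m j).trans (add_comm _ _)
      have habsorb : ((m : ℝ) + 1) * m.choose j = (m + 1).choose (j + 1) * (j + 1) := by
        exact_mod_cast Nat.add_one_mul_choose_eq m j
      calc ∑ P ∈ (insert b s).powersetCard (j + 1), ∏ i ∈ P, x i
          = ∑ P ∈ s.powersetCard (j + 1), ∏ i ∈ P, x i +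
              x b * ∑ P ∈ s.powersetCard j, ∏ i ∈ P, x i :=
            sum_powersetCard_succ_insert_prod hb x j
        _ ≤ m.choose (j + 1) * a ^ (j + 1) + x b * (m.choose j * a ^ j) := by
            gcongr
            exacts [ih hxs _, ih hxs _]
        _ = (m + 1).choose (j + 1) * (a ^ (j + 1) + (j + 1) * a ^ j * (v - a)) := by
            rw [hxb_eq]
            linear_combination (a ^ j * v - a ^ (j + 1)) * habsorb - a ^ (j + 1) * hpascal
        _ ≤ (m + 1).choose (j + 1) * v ^ (j + 1) := by
            gcongr
            exact pow_succ_add_mul_pow_mul_sub_le ha hv j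
        _ = (#(insert b s)).choose (j + 1) * ((∑ i ∈ insert b s, x i) / #(insert b s)) ^ (j + 1) := by
            rw [card_insert_of_notMem hb, sum_insert hb]
            push_cast
            rfl

theorem sum_powersetCard_sum_eq {ι : Type*} (s : Finset ι) (c : ι → ℝ) (k : ℕ) :
    ∑ P ∈ s.powersetCard k, ∑ i ∈ P, c i = (#s).choose k * (k / #s * ∑ i ∈ s, c i) := by
  classical
  rcases k with _ | j
  · simp
  have hcount : ∀ i ∈ s, #{P ∈ s.powersetCard (j + 1) | i ∈ P} = (#s - 1).choose j := by
    intro i hi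
    simpa using card_filter_powersetCard_subset {i} s (j + 1) (by simpa) (by simp)
  rw [sum_comm' (t' := s) (s' := fun i => {P ∈ s.powersetCard (j + 1) | i ∈ P})]
  · rw [sum_congr rfl fun i hi => by rw [sum_const, hcount i hi, nsmul_eq_mul], ← mul_sum]
    cases hs : #s with
    | zero => simp [card_eq_zero.1 hs]
    | succ m =>
      have habsorb : ((m : ℝ) + 1) * m.choose j = (m + 1).choose (j + 1) * (j + 1) := by
        exact_mod_cast Nat.add_one_mul_choose_eq m j
      push_cast
      field_simp
      linear_combination (∑ i ∈ s, c i) * habsorb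
  · intro P i
    simp only [mem_powersetCard, mem_filter]
    grind

theorem sum_exp_mul_div_card_le_exp {ι : Type*} [Fintype ι] {a b : ℝ} {c : ι → ℝ}
    (hc : ∀ i, c i ∈ Set.Icc a b) (t : ℝ) :
    (∑ i, exp (t * c i)) / Fintype.card ι ≤
      exp (t * ((∑ i, c i) / Fintype.card ι) + (b - a) ^ 2 * t ^ 2 / 8) := by
  cases isEmpty_or_nonempty ι
  · simp only [univ_eq_empty, sum_empty, zero_div]
    positivity
  let _ : MeasurableSpace ι := ⊤
  set μ := (PMF.uniformOfFintype ι).toMeasure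
  have hmean (f : ι → ℝ) : μ[f] = (∑ i, f i) / Fintype.card ι := by
    simp [μ, PMF.integral_eq_sum, PMF.uniformOfFintype_apply, ← Finset.mul_sum, div_eq_inv_mul]
  have hsub := (hasSubgaussianMGF_of_mem_Icc measurable_from_top.aemeasurable
    (ae_of_all μ hc)).mgf_le t
  rw [mgf, hmean, hmean] at hsub
  set m := (∑ i, c i) / Fintype.card ι
  have hvar : (((‖b - a‖₊ / 2) ^ 2 : NNReal) : ℝ) * t ^ 2 / 2 = (b - a) ^ 2 * t ^ 2 / 8 := by
    push_cast
    rw [norm_eq_abs, div_pow, sq_abs]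
    ring
  have hcenter : ∑ i, exp (t * c i) = exp (t * m) * ∑ i, exp (t * (c i - m)) := by
    rw [mul_sum]
    congr with i
    rw [← exp_add]
    ring_nf
  rw [hvar] at hsub
  calc (∑ i, exp (t * c i)) / Fintype.card ι
      = exp (t * m) * ((∑ i, exp (t * (c i - m))) / Fintype.card ι) := by
        rw [hcenter, mul_div_assoc]
    _ ≤ exp (t * m) * exp ((b - a) ^ 2 * t ^ 2 / 8) := by gcongr
    _ = exp (t * m + (b - a) ^ 2 * t ^ 2 / 8) := (exp_add _ _).symm

theorem card_filter_le_exp_mul_sum_exp {α : Type*} (s : Finset α) (f : α → ℝ) {t r : ℝ}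
    (hr : 0 ≤ r) :
    (#{x ∈ s | t ≤ f x} : ℝ) ≤ exp (-(r * t)) * ∑ x ∈ s, exp (r * f x) := by
  rw [mul_sum, card_eq_sum_ones, Nat.cast_sum, Nat.cast_one]
  calc ∑ x ∈ s with t ≤ f x, (1 : ℝ)
      ≤ ∑ x ∈ s with t ≤ f x, exp (-(r * t)) * exp (r * f x) := by
        refine sum_le_sum fun x hx => ?_
        rw [← exp_add]
        exact one_le_exp (by nlinarith [(mem_filter.1 hx).2])
    _ ≤ ∑ x ∈ s, exp (-(r * t)) * exp (r * f x) :=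
        sum_le_sum_of_subset_of_nonneg (filter_subset _ _) fun _ _ _ => by positivity

theorem card_filter_powersetCard_sum_sub_ge_le {ι : Type*} [Fintype ι] {a b : ℝ} {c : ι → ℝ}
    (hc : ∀ i, c i ∈ Set.Icc a b) (k : ℕ) {t : ℝ} (ht : 0 ≤ t) :
    (#{P ∈ univ.powersetCard k | t ≤ ∑ i ∈ P, c i - k / Fintype.card ι * ∑ i, c i} : ℝ) ≤
      (Fintype.card ι).choose k * exp (-(2 * t ^ 2) / (k * (b - a) ^ 2)) := by
  set n := Fintype.card ι
  set w := (b - a) ^ 2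
  -- The exponent divides by zero, so the bound is just the number of `k`-subsets.
  by_cases hkw : (k : ℝ) * w = 0
  · rw [hkw, div_zero, exp_zero, mul_one]
    exact_mod_cast (card_filter_le _ _).trans (card_powersetCard k univ).le
  -- `r` minimises the exponent `-r t + k w r² / 8`.
  set r := 4 * t / (k * w)
  set m := (∑ i, c i) / n
  have hr : 0 ≤ r := by positivity
  have hmean : (k : ℝ) / n * ∑ i, c i = k * m := by ring
  have htilt : ∀ P : Finset ι, exp (r * (∑ i ∈ P, c i - k * m)) =
      exp (-(r * (k * m))) * ∏ i ∈ P, exp (r * c i) := by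
    intro P
    rw [← exp_sum, ← exp_add, ← mul_sum]
    ring_nf
  calc (#{P ∈ univ.powersetCard k | t ≤ ∑ i ∈ P, c i - k / n * ∑ i, c i} : ℝ)
      ≤ exp (-(r * t)) * ∑ P ∈ univ.powersetCard k, exp (r * (∑ i ∈ P, c i - k * m)) := by
        simpa only [hmean] using card_filter_le_exp_mul_sum_exp _ _ hr
    _ = exp (-(r * t)) * exp (-(r * (k * m))) *
          ∑ P ∈ univ.powersetCard k, ∏ i ∈ P, exp (r * c i) := by
        rw [sum_congr rfl fun P _ => htilt P, ← mul_sum, mul_assoc]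
    _ ≤ exp (-(r * t)) * exp (-(r * (k * m))) * (n.choose k * ((∑ i, exp (r * c i)) / n) ^ k) := by
        gcongr
        simpa using sum_powersetCard_prod_le_choose_mul_pow univ (fun i _ => (exp_pos (r * c i)).le) k
    _ ≤ exp (-(r * t)) * exp (-(r * (k * m))) * (n.choose k * exp (r * m + w * r ^ 2 / 8) ^ k) := by
        gcongr
        exact sum_exp_mul_div_card_le_exp hc r
    _ = n.choose k * exp (-(2 * t ^ 2) / (k * w)) := by
        rw [← exp_nat_mul, ← exp_add, mul_left_comm, ← exp_add]
        congr 2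
        simp only [r]
        field_simp
        ring

theorem stmt_9_general (n k : ℕ) (hkn : k ≤ n)
    (D t : ℝ) (ht : 0 < t)
    (c : Fin n → ℝ) (hc : ∀ i, -D ≤ c i ∧ c i ≤ D)
    (μ : ℝ) (hμ : μ = ((k : ℝ) / n) * ∑ i, c i) :
    (((n.choose k : ℝ))⁻¹ *
        ∑ P ∈ (Finset.univ : Finset (Fin n)).powersetCard k, ∑ i ∈ P, c i = μ) ∧
    ((((Finset.univ : Finset (Fin n)).powersetCard k).filter
        (fun P => (∑ i ∈ P, c i) - μ ≥ t)).card : ℝ) / (n.choose k : ℝ) ≤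
      Real.exp (-(2 * t ^ 2) / (k * (2 * D) ^ 2)) ∧
    Real.exp (-(2 * t ^ 2) / (k * (2 * D) ^ 2)) =
      Real.exp (-(t ^ 2) / (2 * k * D ^ 2)) := by
  have hC : (0 : ℝ) < n.choose k := Nat.cast_pos.2 (Nat.choose_pos hkn)
  subst hμ
  refine ⟨?_, ?_, ?_⟩
  · rw [sum_powersetCard_sum_eq, card_univ, Fintype.card_fin, inv_mul_cancel_left₀ hC.ne']
  · rw [div_le_iff₀' hC, show 2 * D = D - -D by ring]
    simpa using card_filter_powersetCard_sum_sub_ge_le hc k ht.le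
  · rw [show (k : ℝ) * (2 * D) ^ 2 = 2 * (2 * k * D ^ 2) by ring,
      show -(2 * t ^ 2) = 2 * -t ^ 2 by ring, mul_div_mul_left _ _ two_ne_zero]

/-- Serfling's inequality, special consequence: for values
`c₁,…,cₙ ∈ [−D,D]` and `X` the sum of `k` of them chosen uniformly at random
without replacement, `E[X] = (k/n)·Σᵢ cᵢ` and for `t > 0`,
`Pr[X − E[X] ≥ t] ≤ exp(−2t²/(k(2D)²)) = exp(−t²/(2kD²))`. -/
theorem stmt_9 (n k : ℕ) (hkpos : 0 < k) (hkn : k ≤ n)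
    (D t : ℝ) (ht : 0 < t)
    (c : Fin n → ℝ) (hc : ∀ i, -D ≤ c i ∧ c i ≤ D)
    (μ : ℝ) (hμ : μ = ((k : ℝ) / n) * ∑ i, c i) :
    (((n.choose k : ℝ))⁻¹ *
        ∑ P ∈ (Finset.univ : Finset (Fin n)).powersetCard k, ∑ i ∈ P, c i = μ) ∧
    ((((Finset.univ : Finset (Fin n)).powersetCard k).filter
        (fun P => (∑ i ∈ P, c i) - μ ≥ t)).card : ℝ) / (n.choose k : ℝ) ≤
      Real.exp (-(2 * t ^ 2) / (k * (2 * D) ^ 2)) ∧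
    Real.exp (-(2 * t ^ 2) / (k * (2 * D) ^ 2)) =
      Real.exp (-(t ^ 2) / (2 * k * D ^ 2)) :=
  stmt_9_general n k hkn D t ht c hc μ hμ
end

section
/- For all integers k ≥ 3 and n ≥ k, min{ (⌈2k/3⌉·⌈n/k⌉ − 1)/n , 1 − (k − ⌈2k/3⌉ + 1)/n } ≤ 19/21. -/
/-!
Write `a = ⌈2k/3⌉` and `m = ⌈n/k⌉`, so that `2k ≤ 3a ≤ 2k + 2` and `km ≤ n + k - 1`.
If `2n ≤ 21(k - a + 1)`, the second term is at most `1 - 2/21 = 19/21`. Otherwise `n` is large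
compared with `k`, and `am - 1 ≤ a(n + k - 1)/k - 1 ≤ 19n/21` reduces to a quadratic
inequality in `k` and `r = 3a - 2k`, which holds because `0 ≤ r ≤ min 2 (k - 3)`.
-/

theorem Int.le_mul_ceil_div_and_mul_ceil_div_lt {K : Type*} [Field K] [LinearOrder K]
    [IsStrictOrderedRing K] [FloorRing K] (p : ℤ) {q : ℤ} (hq : 0 < q) :
    p ≤ q * ⌈(p : K) / q⌉ ∧ q * ⌈(p : K) / q⌉ < p + q := by
  have hq' : (0 : K) < q := by exact_mod_cast hq
  constructor
  · have : (p : K) ≤ q * ⌈(p : K) / q⌉ := by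
      rw [← div_le_iff₀' hq']
      exact Int.le_ceil _
    exact_mod_cast this
  · have : (q : K) * ⌈(p : K) / q⌉ < p + q := by
      rw [← lt_div_iff₀' hq', add_div, div_self hq'.ne']
      exact Int.ceil_lt_add_one _
    exact_mod_cast this

theorem twentyone_mul_sub_one_le_nineteen_mul {k n a m : ℤ} (hk : 3 ≤ k)
    (ha : 2 * k ≤ 3 * a) (ha' : 3 * a ≤ 2 * k + 2) (hm : k * m ≤ n + k - 1)
    (hn : 21 * (k - a + 1) < 2 * n) :
    21 * (a * m - 1) ≤ 19 * n := by
  obtain ⟨r, hr, hr0, hr2, hrk⟩ :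
      ∃ r, 3 * a = 2 * k + r ∧ 0 ≤ r ∧ r ≤ 2 ∧ r ≤ k - 3 :=
    ⟨3 * a - 2 * k, by omega, by omega, by omega, by omega⟩
  have h6n : 21 * (k - r + 3) < 6 * n := by omega
  refine le_of_mul_le_mul_left ?_ (by omega : 0 < 3 * k)
  nlinarith [mul_le_mul_of_nonneg_left hm (by omega : 0 ≤ 2 * k + r),
    mul_lt_mul_of_pos_left h6n (by omega : 0 < 5 * k - 7 * r)]

/-- For all integers `3 ≤ k ≤ n`,
`min{(⌈2k/3⌉·⌈n/k⌉ − 1)/n, 1 − (k − ⌈2k/3⌉ + 1)/n} ≤ 19/21`. -/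
theorem stmt_11 (k n : ℕ) (hk : 3 ≤ k) (hkn : k ≤ n) :
    min (((((⌈(2 * (k : ℚ)) / 3⌉ : ℤ) : ℝ) * ((⌈(n : ℚ) / (k : ℚ)⌉ : ℤ) : ℝ) - 1) / (n : ℝ)))
      (1 - ((k : ℝ) - ((⌈(2 * (k : ℚ)) / 3⌉ : ℤ) : ℝ) + 1) / (n : ℝ)) ≤ 19 / 21 := by
  have hn : (0 : ℝ) < n := by exact_mod_cast (by omega : 0 < n)
  obtain ⟨ha, ha'⟩ :=
    Int.le_mul_ceil_div_and_mul_ceil_div_lt (K := ℚ) (2 * k) (q := 3) (by norm_num)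
  obtain ⟨-, hm⟩ := Int.le_mul_ceil_div_and_mul_ceil_div_lt (K := ℚ) n (q := k) (by omega)
  simp only [Int.cast_mul, Int.cast_ofNat, Int.cast_natCast] at ha ha' hm
  generalize ⌈(2 * (k : ℚ)) / 3⌉ = a at ha ha' ⊢
  generalize ⌈(n : ℚ) / (k : ℚ)⌉ = m at hm ⊢
  by_cases hsmall : 2 * (n : ℤ) ≤ 21 * (k - a + 1)
  · refine (min_le_right _ _).trans ?_
    have : (2 : ℝ) * n ≤ 21 * (k - a + 1) := by exact_mod_cast hsmall
    rw [sub_le_comm, le_div_iff₀ hn]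
    linarith
  · have hbig : (21 : ℤ) * (a * m - 1) ≤ 19 * n :=
      twentyone_mul_sub_one_le_nineteen_mul (m := m) (by omega) ha (by omega) (by omega)
        (not_le.mp hsmall)
    have : (21 : ℝ) * (a * m - 1) ≤ 19 * n := by exact_mod_cast hbig
    refine (min_le_left _ _).trans ?_
    rw [div_le_iff₀ hn]
    linarith
end

section
/- Let d be a pseudo-metric on N ∪ C with |N| = n, let c*, c' ∈ C with D = d(c*, c') > 0, and let L = {i ∈ N : d(i, c') < D/12}. Then SC(c*) ≤ 13·SC(c') + |L|·D and SC(c') ≥ (n − |L|)·D/12; consequently SC(c*) ≤ (13 + 12·|L|/(n − |L|))·SC(c') whenever |L| < n. -/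
/-!
By the triangle inequality every agent pays at most `d(i, c') + D` at `c*`. An agent far from `c'`,
with `d(i, c') ≥ D / t`, has `D ≤ t · d(i, c')` and so pays at most `(1 + t) · d(i, c')`; only the
agents of `L` cost the extra `D`. Conversely every agent outside `L` contributes at least `D / t`
to `SC(c')`, which bounds `D`, and with it the extra term `|L| · D`, by a multiple of `SC(c')`.
-/

open Finset

theorem card_sub_card_filter_lt_mul_le_sum {ι : Type*} (s : Finset ι) (f : ι → ℝ)
    (hf : ∀ i ∈ s, 0 ≤ f i) (r : ℝ) :
    ((s.card : ℝ) - (s.filter (f · < r)).card) * r ≤ ∑ i ∈ s, f i := by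
  have hcard : ((s.filter (fun i => ¬ f i < r)).card : ℝ) =
      s.card - (s.filter (f · < r)).card := by
    rw [eq_sub_iff_add_eq, add_comm]
    exact_mod_cast card_filter_add_card_filter_not _
  calc ((s.card : ℝ) - (s.filter (f · < r)).card) * r
        = ∑ i ∈ s, if f i < r then 0 else r := by
          rw [sum_ite, sum_const_zero, zero_add, sum_const, nsmul_eq_mul, hcard]
    _ ≤ ∑ i ∈ s, f i := sum_le_sum fun i hi => by
          split_ifs with h
          exacts [hf i hi, not_lt.mp h]

section PseudoMetric

variable {V : Type*} (d : V → V → ℝ) (hsymm : ∀ x y, d x y = d y x)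
  (htri : ∀ x y z, d x z ≤ d x y + d y z) (hnonneg : ∀ x y, 0 ≤ d x y)
include hsymm htri hnonneg

theorem le_one_add_mul_add_ite {t : ℝ} (ht : 0 < t) (x c c' : V) :
    d x c ≤ (1 + t) * d x c' + if d x c' < d c c' / t then d c c' else 0 := by
  have hvia : d x c ≤ d x c' + d c c' := hsymm c c' ▸ htri x c' c
  have hx := hnonneg x c'
  split_ifs with hnear
  · nlinarith
  · have hfar : d c c' ≤ t * d x c' := by
      rw [← div_le_iff₀' ht]
      exact not_lt.mp hnear
    linarith

theorem sum_le_one_add_mul_sum_add_card_mul {t : ℝ} (ht : 0 < t) (N : Finset V) (c c' : V) :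
    ∑ i ∈ N, d i c ≤ (1 + t) * ∑ i ∈ N, d i c' +
      (N.filter (fun i => d i c' < d c c' / t)).card * d c c' :=
  calc ∑ i ∈ N, d i c
      ≤ ∑ i ∈ N, ((1 + t) * d i c' + if d i c' < d c c' / t then d c c' else 0) :=
        sum_le_sum fun i _ => le_one_add_mul_add_ite d hsymm htri hnonneg ht i c c'
    _ = _ := by
        rw [sum_add_distrib, mul_sum, sum_ite, sum_const_zero, add_zero, sum_const,
          nsmul_eq_mul]

end PseudoMetric

theorem le_add_div_sub_mul_of_le_add_mul {A S D k m t : ℝ} (ht : 0 < t) (hk : 0 ≤ k)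
    (hkm : k < m) (hA : A ≤ (1 + t) * S + k * D) (hS : (m - k) * D / t ≤ S) :
    A ≤ (1 + t + t * k / (m - k)) * S := by
  have hmk : 0 < m - k := sub_pos.mpr hkm
  have hD : D ≤ t * S / (m - k) := by
    rw [le_div_iff₀ hmk]
    rw [div_le_iff₀ ht] at hS
    linarith
  calc A ≤ (1 + t) * S + k * (t * S / (m - k)) := by nlinarith
    _ = (1 + t + t * k / (m - k)) * S := by ring

theorem stmt_12_general {V : Type*} (d : V → V → ℝ)
    (hsymm : ∀ x y, d x y = d y x)
    (htri : ∀ x y z, d x z ≤ d x y + d y z)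
    (hnonneg : ∀ x y, 0 ≤ d x y)
    (N : Finset V) (n : ℕ) (hn : N.card = n)
    (cstar c' : V) (D : ℝ) (hD : D = d cstar c')
    (L : Finset V) (hL : L = N.filter (fun i => d i c' < D / 12)) :
    (∑ i ∈ N, d i cstar ≤ 13 * (∑ i ∈ N, d i c') + (L.card : ℝ) * D) ∧
    (∑ i ∈ N, d i c' ≥ ((n : ℝ) - L.card) * D / 12) ∧
    (L.card < n →
      ∑ i ∈ N, d i cstar ≤
        (13 + 12 * (L.card : ℝ) / ((n : ℝ) - L.card)) * ∑ i ∈ N, d i c') := by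
  subst hn hL hD
  have hcost := sum_le_one_add_mul_sum_add_card_mul d hsymm htri hnonneg
    (by norm_num : (0 : ℝ) < 12) N cstar c'
  have hfar := card_sub_card_filter_lt_mul_le_sum N (d · c') (fun i _ => hnonneg i c')
    (d cstar c' / 12)
  rw [← mul_div_assoc] at hfar
  have h13 : (1 : ℝ) + 12 = 13 := by norm_num
  refine ⟨h13 ▸ hcost, hfar, fun hlt => ?_⟩
  exact h13 ▸ le_add_div_sub_mul_of_le_add_mul (by norm_num) (Nat.cast_nonneg _)
    (by exact_mod_cast hlt) hcost hfar

/-- With `D = d(c*,c') > 0` and `L = {i ∈ N : d(i,c') < D/12}`: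
`SC(c*) ≤ 13·SC(c') + |L|·D`, `SC(c') ≥ (n − |L|)·D/12`, and if `|L| < n` then
`SC(c*) ≤ (13 + 12·|L|/(n − |L|))·SC(c')`. -/
theorem stmt_12 {V : Type*} [DecidableEq V] (d : V → V → ℝ)
    (hsymm : ∀ x y, d x y = d y x)
    (htri : ∀ x y z, d x z ≤ d x y + d y z)
    (hnonneg : ∀ x y, 0 ≤ d x y)
    (N : Finset V) (n : ℕ) (hn : N.card = n)
    (cstar c' : V) (D : ℝ) (hD : D = d cstar c') (hDpos : 0 < D)
    (L : Finset V) (hL : L = N.filter (fun i => d i c' < D / 12)) :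
    (∑ i ∈ N, d i cstar ≤ 13 * (∑ i ∈ N, d i c') + (L.card : ℝ) * D) ∧
    (∑ i ∈ N, d i c' ≥ ((n : ℝ) - L.card) * D / 12) ∧
    (L.card < n →
      ∑ i ∈ N, d i cstar ≤
        (13 + 12 * (L.card : ℝ) / ((n : ℝ) - L.card)) * ∑ i ∈ N, d i c') :=
  stmt_12_general d hsymm htri hnonneg N n hn cstar c' D hD L hL
end

section
/- Combining the above: if |L| ≤ n·(19/21) (where L is the set of agents within distance D/12 of the optimal alternative c', and D = d(c(P), c')), then SC(c(P)) ≤ (13 + 12·(19/21)/(1 − 19/21))·SC(c') = 127·SC(c'). Hence Fair Greedy Capture with panel size k ≥ 3 guarantees ex-post distortion at most 127. -/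
/-- If `L` (agents within `D/12` of the optimal alternative `c'`,
where `D = d(c(P), c')`) satisfies `|L| ≤ 19n/21`, then
`SC(c(P)) ≤ (13 + 12·(19/21)/(1 − 19/21))·SC(c') = 127·SC(c')` — i.e. the
ex-post distortion of the panel's choice is at most `127`. -/
theorem stmt_14 {V : Type*} [DecidableEq V] (d : V → V → ℝ)
    (hsymm : ∀ x y, d x y = d y x)
    (htri : ∀ x y z, d x z ≤ d x y + d y z)
    (hnonneg : ∀ x y, 0 ≤ d x y)
    (N C : Finset V) (n : ℕ) (hn : N.card = n) (hnpos : 0 < n)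
    (c' : V) (hc'C : c' ∈ C)
    (hopt : ∀ c ∈ C, ∑ i ∈ N, d i c' ≤ ∑ i ∈ N, d i c)
    (cP : V) (hcPC : cP ∈ C)
    (D : ℝ) (hD : D = d cP c')
    (L : Finset V) (hL : L = N.filter (fun i => d i c' < D / 12))
    (hLsize : (L.card : ℝ) ≤ 19 * (n : ℝ) / 21) :
    (∑ i ∈ N, d i cP ≤ (13 + 12 * (19 / 21) / (1 - 19 / 21)) * ∑ i ∈ N, d i c') ∧
    (∑ i ∈ N, d i cP ≤ 127 * ∑ i ∈ N, d i c') := by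
  classical
  have hD0 : 0 ≤ D := hD ▸ hnonneg cP c'
  set S := ∑ i ∈ N, d i c' with hSdef
  have hS0 : 0 ≤ S := Finset.sum_nonneg fun i _ => hnonneg i c'
  -- agents outside L are far from c'
  set M := N.filter (fun i => ¬ d i c' < D / 12) with hMdef
  have hMle : ∀ i ∈ M, D / 12 ≤ d i c' := fun i hi =>
    le_of_not_gt (Finset.mem_filter.mp hi).2
  have h1 : (M.card : ℝ) * (D / 12) ≤ ∑ i ∈ M, d i c' := by
    have := Finset.card_nsmul_le_sum M (fun i => d i c') (D / 12) hMle
    simpa [nsmul_eq_mul] using this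
  have h2 : ∑ i ∈ M, d i c' ≤ S :=
    Finset.sum_le_sum_of_subset_of_nonneg (Finset.filter_subset _ _)
      (fun i _ _ => hnonneg i c')
  have hcard : L.card + M.card = n := by
    rw [hL, hMdef, Finset.card_filter_add_card_filter_not, hn]
  have hMbig : 2 * (n : ℝ) / 21 ≤ (M.card : ℝ) := by
    have : (L.card : ℝ) + (M.card : ℝ) = (n : ℝ) := by
      exact_mod_cast congrArg (Nat.cast (R := ℝ)) hcard
    linarith
  have key : (n : ℝ) * D ≤ 126 * S := by
    have h3 : (2 * (n : ℝ) / 21) * (D / 12) ≤ (M.card : ℝ) * (D / 12) := by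
      apply mul_le_mul_of_nonneg_right hMbig (by positivity)
    nlinarith
  have htriS : ∑ i ∈ N, d i cP ≤ S + (n : ℝ) * D := by
    have : ∑ i ∈ N, d i cP ≤ ∑ i ∈ N, (d i c' + D) := by
      apply Finset.sum_le_sum
      intro i hi
      calc d i cP ≤ d i c' + d c' cP := htri i c' cP
        _ = d i c' + D := by rw [hsymm c' cP, hD]
    simpa [Finset.sum_add_distrib, hn, mul_comm] using this
  have hmain : ∑ i ∈ N, d i cP ≤ 127 * S := by linarith
  constructor
  · have : (13 + 12 * (19 / 21) / (1 - 19 / 21) : ℝ) = 127 := by norm_num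
    rw [this]; exact hmain
  · exact hmain
end

section
/- Fix δ ∈ (0,1) and even n. Consider n/2 agents at position 0 and n/2 agents at position 1 on the real line, with alternatives at −1+δ and at 1. The panel of all agents at 0 selects the alternative at −1+δ (social cost (3/2 − δ)n), and the panel of all agents at 1 selects the alternative at 1 (social cost n/2). The selection algorithm returning each of these two panels with probability 1/2 is fair (each agent is on the panel with probability 1/2 = k/n for k = n/2), and its ex-ante distortion equals 2 − δ. -/
/-!
Half of the agents sit at `0` and half at `1`, so the cost of an alternative `c` is
`n/2 · (|c| + |1 - c|)`: this is `(3/2 - δ) n` for `c = -1 + δ` and `n/2` for `c = 1`. Each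
half-panel selects the alternative nearer to it, and averaging the two costs and dividing by
the optimum `n/2` gives `2 - δ`.
-/

open Finset

section TwoClusters

variable {n : ℕ} {pos : Fin n → ℝ}

lemma card_filter_not_val_lt_half_of_even (heven : Even n) :
    #{i : Fin n | ¬ (i : ℕ) < n / 2} = n / 2 := by
  rw [filter_not, card_sdiff_of_subset (filter_subset _ _), card_univ, Fintype.card_fin,
    Fin.card_filter_val_lt, min_eq_right (Nat.div_le_self n 2)]
  have := Nat.div_mul_cancel heven.two_dvd
  omega

lemma sum_abs_sub_lowerHalf (hpos : ∀ i : Fin n, pos i = if (i : ℕ) < n / 2 then 0 else 1)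
    (c : ℝ) : ∑ i ∈ univ.filter (fun i : Fin n => (i : ℕ) < n / 2), |pos i - c|
      = ((n / 2 : ℕ) : ℝ) * |c| := by
  rw [sum_eq_card_nsmul (b := |c|), Fin.card_filter_val_lt, min_eq_right (Nat.div_le_self n 2),
    nsmul_eq_mul]
  intro i hi
  rw [hpos, if_pos (mem_filter.mp hi).2, zero_sub, abs_neg]

lemma sum_abs_sub_upperHalf (heven : Even n)
    (hpos : ∀ i : Fin n, pos i = if (i : ℕ) < n / 2 then 0 else 1) (c : ℝ) :
    ∑ i ∈ univ.filter (fun i : Fin n => ¬ (i : ℕ) < n / 2), |pos i - c|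
      = ((n / 2 : ℕ) : ℝ) * |1 - c| := by
  rw [sum_eq_card_nsmul (b := |1 - c|), card_filter_not_val_lt_half_of_even heven, nsmul_eq_mul]
  intro i hi
  rw [hpos, if_neg (mem_filter.mp hi).2]

lemma sum_abs_sub_twoClusters (heven : Even n)
    (hpos : ∀ i : Fin n, pos i = if (i : ℕ) < n / 2 then 0 else 1) (c : ℝ) :
    ∑ i, |pos i - c| = n / 2 * (|c| + |1 - c|) := by
  rw [← sum_filter_add_sum_filter_not univ (fun i : Fin n => (i : ℕ) < n / 2),
    sum_abs_sub_lowerHalf hpos, sum_abs_sub_upperHalf heven hpos,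
    Nat.cast_div heven.two_dvd two_ne_zero, Nat.cast_ofNat]
  ring

end TwoClusters

/-- On the real line with `n/2` agents at `0` and `n/2` agents at
`1` and alternatives at `−1+δ` and `1` (with `δ ∈ (0,1)`, `n` even and positive):
the panel of agents at `0` selects `−1+δ`, the panel of agents at `1` selects
`1`, the social costs are `(3/2 − δ)n` and `n/2`, the fifty-fifty mixture of the
two panels puts every agent on the panel with probability `1/2 = k/n` (fair for
`k = n/2`), and its ex-ante distortion equals `2 − δ`. -/
theorem stmt_15 (n : ℕ) (hn : 0 < n) (heven : Even n)
    (δ : ℝ) (hδ0 : 0 < δ) (hδ1 : δ < 1)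
    (pos : Fin n → ℝ) (hpos : ∀ i : Fin n, pos i = if (i : ℕ) < n / 2 then 0 else 1)
    (A B : Finset (Fin n))
    (hA : A = Finset.univ.filter (fun i : Fin n => (i : ℕ) < n / 2))
    (hB : B = Finset.univ.filter (fun i : Fin n => ¬ (i : ℕ) < n / 2)) :
    (∑ i ∈ A, |pos i - (-1 + δ)| ≤ ∑ i ∈ A, |pos i - 1|) ∧
    (∑ i ∈ B, |pos i - 1| ≤ ∑ i ∈ B, |pos i - (-1 + δ)|) ∧
    (∑ i : Fin n, |pos i - (-1 + δ)| = (3 / 2 - δ) * n) ∧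
    (∑ i : Fin n, |pos i - 1| = (n : ℝ) / 2) ∧
    (∀ i : Fin n,
      (if i ∈ A then (1 : ℝ) / 2 else 0) + (if i ∈ B then (1 : ℝ) / 2 else 0)
        = 1 / 2) ∧
    (((1 : ℝ) / 2 * ∑ i : Fin n, |pos i - (-1 + δ)| +
        (1 : ℝ) / 2 * ∑ i : Fin n, |pos i - 1|) /
      (min (∑ i : Fin n, |pos i - (-1 + δ)|) (∑ i : Fin n, |pos i - 1|)) = 2 - δ) := by
  subst hA hB
  have hnear : |(-1 + δ : ℝ)| = 1 - δ := by rw [abs_of_neg (by linarith)]; ring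
  have hfar : |(1 : ℝ) - (-1 + δ)| = 2 - δ := by rw [abs_of_pos (by linarith)]; ring
  have hhalf_nonneg : (0 : ℝ) ≤ ((n / 2 : ℕ) : ℝ) := Nat.cast_nonneg _
  have hn' : (0 : ℝ) < n := Nat.cast_pos.mpr hn
  have hcost : ∑ i, |pos i - (-1 + δ)| = (3 / 2 - δ) * n := by
    rw [sum_abs_sub_twoClusters heven hpos, hnear, hfar]; ring
  have hcost₁ : ∑ i, |pos i - 1| = (n : ℝ) / 2 := by
    rw [sum_abs_sub_twoClusters heven hpos]; norm_num
  refine ⟨?_, ?_, hcost, hcost₁, fun i => ?_, ?_⟩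
  · rw [sum_abs_sub_lowerHalf hpos, sum_abs_sub_lowerHalf hpos, hnear, abs_one]
    exact mul_le_mul_of_nonneg_left (by linarith) hhalf_nonneg
  · rw [sum_abs_sub_upperHalf heven hpos, sum_abs_sub_upperHalf heven hpos, hfar, sub_self,
      abs_zero]
    exact mul_le_mul_of_nonneg_left (by linarith) hhalf_nonneg
  · by_cases h : (i : ℕ) < n / 2 <;> simp [h]
  · rw [hcost, hcost₁, min_eq_right (by nlinarith)]
    field_simp
    ring
end

section
/- Let d be a pseudo-metric on N ∪ C and P ⊆ N a k-set of agents. For alternatives a, c' ∈ C with D = d(a,c'), the random variable SC(P,c') − SC(P,a) (for P chosen uniformly among k-subsets of N) has expectation −(k/n)(SC(a) − SC(c')), and Pr[SC(P,c') ≥ SC(P,a)] ≤ exp(−2k·(SC(a) − SC(c'))²/(n²·(2D)²)). -/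
/-!
Write `x i = d(i,c') - d(i,a)`; by the triangle inequality `x i ∈ [-D, D]`, and
`SC(P,c') - SC(P,a) = ∑_{i ∈ P} x i`. The expectation is double counting: each agent lies in
`C(n-1,k-1)` of the `k`-subsets. For the tail, Chernoff's method bounds the number of bad
`k`-subsets by `e^{-λ t}` times the elementary symmetric function `e_k` of the numbers
`e^{λ (x i - μ)}`. Maclaurin's inequality `e_k ≤ C(n,k) (e_1/n)^k` reduces sampling without
replacement to `k` independent draws, and Hoeffding's lemma bounds `e_1/n ≤ e^{λ² (2D)²/8}`.
-/

open Finset Real MeasureTheory ProbabilityTheory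

theorem pow_succ_add_mul_sub_le {t u : ℝ} (ht : 0 ≤ t) (hu : 0 ≤ u) (m : ℕ) :
    t ^ (m + 1) + (m + 1) * t ^ m * (u - t) ≤ u ^ (m + 1) := by
  rcases ht.eq_or_lt with rfl | ht
  · cases m <;> simp [hu]
  have bernoulli := one_add_mul_le_pow (a := u / t - 1) (by linarith [div_nonneg hu ht.le]) (m + 1)
  rw [add_sub_cancel, div_pow, le_div_iff₀ (pow_pos ht _)] at bernoulli
  calc t ^ (m + 1) + (m + 1) * t ^ m * (u - t)
      = (1 + ((m + 1 : ℕ) : ℝ) * (u / t - 1)) * t ^ (m + 1) := by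
        push_cast; field_simp; ring
    _ ≤ u ^ (m + 1) := bernoulli

/-- The induction step of Maclaurin's inequality: adjoining `y` to `n` numbers of mean `t`. -/
theorem choose_mul_pow_add_le (n k : ℕ) {t y : ℝ} (ht : 0 ≤ t) (hy : 0 ≤ y) :
    n.choose (k + 1) * t ^ (k + 1) + y * (n.choose k * t ^ k) ≤
      (n + 1).choose (k + 1) * ((n * t + y) / (n + 1)) ^ (k + 1) := by
  set u := (n * t + y) / (n + 1)
  have hu : 0 ≤ u := by positivity
  have hslope : ((n : ℝ) + 1) * (u - t) = y - t := by
    simp only [u]; field_simp; ring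
  have hpascal : ((n + 1).choose (k + 1) : ℝ) = n.choose k + n.choose (k + 1) := by
    exact_mod_cast Nat.choose_succ_succ n k
  have habsorb : ((n : ℝ) + 1) * n.choose k = (n + 1).choose (k + 1) * (k + 1) := by
    exact_mod_cast Nat.add_one_mul_choose_eq n k
  clear_value u
  calc n.choose (k + 1) * t ^ (k + 1) + y * (n.choose k * t ^ k)
      = (n + 1).choose (k + 1) * (t ^ (k + 1) + (k + 1) * t ^ k * (u - t)) := by
        linear_combination (-t ^ (k + 1)) * hpascal + (t ^ k * (u - t)) * habsorb
          - (n.choose k * t ^ k) * hslope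
    _ ≤ (n + 1).choose (k + 1) * u ^ (k + 1) := by
        gcongr; exact pow_succ_add_mul_sub_le ht hu k

theorem Fintype.sum_exp_mul_sub_mean_le {Ω : Type*} [Fintype Ω] [Nonempty Ω] (x : Ω → ℝ)
    {a b : ℝ} (hx : ∀ ω, x ω ∈ Set.Icc a b) (t : ℝ) :
    ∑ ω, exp (t * (x ω - (∑ ω', x ω') / Fintype.card Ω)) ≤
      Fintype.card Ω * exp (t ^ 2 * (b - a) ^ 2 / 8) := by
  let _ : MeasurableSpace Ω := ⊤
  have _ : DiscreteMeasurableSpace Ω := ⟨fun _ => trivial⟩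
  set μ := (PMF.uniformOfFintype Ω).toMeasure
  have hintegral (f : Ω → ℝ) : ∫ ω, f ω ∂μ = (∑ ω, f ω) / Fintype.card Ω := by
    simp [μ, PMF.integral_eq_sum, PMF.uniformOfFintype_apply, div_eq_inv_mul, Finset.mul_sum]
  have hmgf := (hasSubgaussianMGF_of_mem_Icc (μ := μ) (measurable_of_countable x).aemeasurable
    (ae_of_all _ hx)).mgf_le t
  have hcard : (0 : ℝ) < Fintype.card Ω := by exact_mod_cast Fintype.card_pos
  rw [mgf, hintegral, hintegral, div_le_iff₀ hcard, mul_comm] at hmgf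
  refine hmgf.trans_eq ?_
  congr 2
  rw [NNReal.coe_pow, NNReal.coe_div, coe_nnnorm, Real.norm_eq_abs, NNReal.coe_ofNat, div_pow,
    sq_abs]
  ring

namespace Finset

theorem sum_exp_mul_sub_mean_le {α : Type*} (s : Finset α) (x : α → ℝ) {a b : ℝ}
    (hx : ∀ i ∈ s, x i ∈ Set.Icc a b) (t : ℝ) :
    ∑ i ∈ s, exp (t * (x i - (∑ j ∈ s, x j) / #s)) ≤ #s * exp (t ^ 2 * (b - a) ^ 2 / 8) := by
  rcases s.eq_empty_or_nonempty with rfl | hs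
  · simp
  have : Nonempty s := hs.to_subtype
  have h := Fintype.sum_exp_mul_sub_mean_le (fun i : s => x i) (fun i => hx i i.2) t
  rwa [sum_coe_sort s x, Fintype.card_coe,
    sum_coe_sort s fun i => exp (t * (x i - (∑ j ∈ s, x j) / #s))] at h

theorem card_filter_le_exp_mul_sum_exp {ι : Type*} (F : Finset ι) (f : ι → ℝ) (θ : ℝ)
    {l : ℝ} (hl : 0 ≤ l) :
    (#(F.filter (θ ≤ f ·)) : ℝ) ≤ exp (-(l * θ)) * ∑ P ∈ F, exp (l * f P) := by
  rw [mul_sum, card_eq_sum_ones, Nat.cast_sum, Nat.cast_one]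
  calc ∑ P ∈ F.filter (θ ≤ f ·), (1 : ℝ)
      ≤ ∑ P ∈ F.filter (θ ≤ f ·), exp (-(l * θ)) * exp (l * f P) := by
        refine sum_le_sum fun P hP => ?_
        rw [← exp_add, one_le_exp_iff]
        nlinarith [(mem_filter.1 hP).2]
    _ ≤ ∑ P ∈ F, exp (-(l * θ)) * exp (l * f P) :=
        sum_le_sum_of_subset_of_nonneg (filter_subset _ _) fun _ _ _ => by positivity

variable {α : Type*} [DecidableEq α]

theorem sum_powersetCard_succ_sum {M : Type*} [AddCommMonoid M] (s : Finset α) (k : ℕ)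
    (g : α → M) :
    ∑ P ∈ s.powersetCard (k + 1), ∑ i ∈ P, g i = (#s - 1).choose k • ∑ i ∈ s, g i := by
  rw [sum_comm' (t' := s) (s' := fun i => (s.powersetCard (k + 1)).filter ({i} ⊆ ·))]
  · rw [smul_sum]
    refine sum_congr rfl fun i hi => ?_
    rw [sum_const, card_filter_powersetCard_subset _ _ _ (singleton_subset_iff.2 hi) (by simp),
      card_singleton, Nat.add_sub_cancel]
  · intro P i
    simp only [mem_powersetCard, mem_filter, singleton_subset_iff]
    exact ⟨fun ⟨hP, hi⟩ => ⟨⟨hP, hi⟩, hP.1 hi⟩, fun ⟨hP, _⟩ => hP⟩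

theorem inv_choose_mul_sum_powersetCard_sum {𝕜 : Type*} [Field 𝕜] [CharZero 𝕜]
    (s : Finset α) {k : ℕ} (hk : k ≤ #s) (g : α → 𝕜) :
    ((#s).choose k : 𝕜)⁻¹ * ∑ P ∈ s.powersetCard k, ∑ i ∈ P, g i = k / #s * ∑ i ∈ s, g i := by
  obtain _ | k := k
  · simp
  obtain ⟨n, hn⟩ := Nat.exists_eq_add_of_le' (k.succ_pos.trans_le hk)
  have hchoose : ((n + 1 : ℕ) : 𝕜) * n.choose k = (n + 1).choose (k + 1) * (k + 1 : ℕ) := by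
    exact_mod_cast Nat.add_one_mul_choose_eq n k
  have hpos : ((n + 1).choose (k + 1) : 𝕜) ≠ 0 := by
    exact_mod_cast (Nat.choose_pos (by omega)).ne'
  rw [sum_powersetCard_succ_sum, nsmul_eq_mul, hn, Nat.add_sub_cancel]
  field_simp
  push_cast at hchoose ⊢
  linear_combination (∑ i ∈ s, g i) * hchoose

theorem sum_powersetCard_succ_insert {M : Type*} [AddCommMonoid M] {a : α} {s : Finset α}
    (ha : a ∉ s) (k : ℕ) (f : Finset α → M) :
    ∑ P ∈ (insert a s).powersetCard (k + 1), f P =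
      ∑ P ∈ s.powersetCard (k + 1), f P + ∑ P ∈ s.powersetCard k, f (insert a P) := by
  rw [powersetCard_succ_insert ha, sum_union, sum_image]
  · exact insert_erase_invOn.2.injOn.mono fun P hP => notMem_mono (mem_powersetCard.1 hP).1 ha
  · aesop (add simp [disjoint_left, insert_subset_iff])

theorem sum_powersetCard_prod_le (s : Finset α) (x : α → ℝ) (hx : ∀ i ∈ s, 0 ≤ x i) (k : ℕ) :
    ∑ P ∈ s.powersetCard k, ∏ i ∈ P, x i ≤ (#s).choose k * ((∑ i ∈ s, x i) / #s) ^ k := by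
  induction s using Finset.induction_on generalizing k with
  | empty =>
    obtain _ | k := k
    · simp
    · rw [powersetCard_eq_empty.2 (by simp)]; simp
  | @insert a s ha ih =>
    obtain _ | k := k
    · simp
    have hxs : ∀ i ∈ s, 0 ≤ x i := fun i hi => hx i (mem_insert_of_mem hi)
    have hxa : 0 ≤ x a := hx a (mem_insert_self a s)
    have hmean : (#s : ℝ) * ((∑ i ∈ s, x i) / #s) = ∑ i ∈ s, x i := by
      rcases s.eq_empty_or_nonempty with rfl | hs
      · simp
      · exact mul_div_cancel₀ _ (by exact_mod_cast hs.card_pos.ne')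
    calc ∑ P ∈ (insert a s).powersetCard (k + 1), ∏ i ∈ P, x i
        = ∑ P ∈ s.powersetCard (k + 1), ∏ i ∈ P, x i
            + x a * ∑ P ∈ s.powersetCard k, ∏ i ∈ P, x i := by
          rw [sum_powersetCard_succ_insert ha, mul_sum]
          congr 1
          refine sum_congr rfl fun P hP => prod_insert fun haP => ha ?_
          exact (mem_powersetCard.1 hP).1 haP
      _ ≤ (#s).choose (k + 1) * ((∑ i ∈ s, x i) / #s) ^ (k + 1)
            + x a * ((#s).choose k * ((∑ i ∈ s, x i) / #s) ^ k) :=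
          add_le_add (ih hxs _) (mul_le_mul_of_nonneg_left (ih hxs _) hxa)
      _ ≤ (#s + 1).choose (k + 1) * ((#s * ((∑ i ∈ s, x i) / #s) + x a) / (#s + 1)) ^ (k + 1) :=
          choose_mul_pow_add_le _ _ (div_nonneg (sum_nonneg hxs) (Nat.cast_nonneg _)) hxa
      _ = _ := by
          rw [hmean, sum_insert ha, card_insert_of_notMem ha, add_comm (x a)]
          push_cast; rfl

theorem sum_powersetCard_exp_mul_sum_le (s : Finset α) (k : ℕ) (x : α → ℝ) {a b : ℝ}
    (hx : ∀ i ∈ s, x i ∈ Set.Icc a b) (l : ℝ) :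
    ∑ P ∈ s.powersetCard k, exp (l * ∑ i ∈ P, (x i - (∑ j ∈ s, x j) / #s)) ≤
      (#s).choose k * exp (k * (l ^ 2 * (b - a) ^ 2 / 8)) := by
  simp_rw [mul_sum, exp_sum]
  refine (sum_powersetCard_prod_le s _ (fun _ _ => (exp_pos _).le) k).trans ?_
  gcongr
  rw [exp_nat_mul]
  have hcard := sum_exp_mul_sub_mean_le s x hx l
  gcongr
  rcases s.eq_empty_or_nonempty with rfl | hs
  · simpa using (exp_pos _).le
  rwa [div_le_iff₀ (by exact_mod_cast hs.card_pos), mul_comm]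

theorem card_filter_powersetCard_le (s : Finset α) (k : ℕ) (x : α → ℝ) {a b : ℝ}
    (hx : ∀ i ∈ s, x i ∈ Set.Icc a b) {t : ℝ} (ht : 0 ≤ t) :
    (#((s.powersetCard k).filter fun P => k / #s * ∑ i ∈ s, x i + t ≤ ∑ i ∈ P, x i) : ℝ) ≤
      (#s).choose k * exp (-(2 * t ^ 2) / (k * (b - a) ^ 2)) := by
  set μ := (∑ j ∈ s, x j) / #s
  have hcentre : ∀ P ∈ s.powersetCard k,
      ∑ i ∈ P, (x i - μ) = ∑ i ∈ P, x i - k / #s * ∑ i ∈ s, x i := by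
    intro P hP
    rw [sum_sub_distrib, sum_const, (mem_powersetCard.1 hP).2, nsmul_eq_mul]
    ring
  have hfilter :
      (s.powersetCard k).filter (fun P => k / #s * ∑ i ∈ s, x i + t ≤ ∑ i ∈ P, x i) =
        (s.powersetCard k).filter (fun P => t ≤ ∑ i ∈ P, (x i - μ)) :=
    filter_congr fun P hP => by rw [hcentre P hP]; constructor <;> intro h <;> linarith
  -- the Chernoff exponent `-l t + k l² (b - a)² / 8` is minimised at this `l`
  set l := 4 * t / (k * (b - a) ^ 2)
  have hexponent :
      -(l * t) + k * (l ^ 2 * (b - a) ^ 2 / 8) = -(2 * t ^ 2) / (k * (b - a) ^ 2) := by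
    rcases eq_or_ne ((k : ℝ) * (b - a) ^ 2) 0 with h | h
    · simp [l, h]
    · simp only [l]; field_simp; ring
  rw [hfilter]
  calc _ ≤ exp (-(l * t)) * ∑ P ∈ s.powersetCard k, exp (l * ∑ i ∈ P, (x i - μ)) :=
        card_filter_le_exp_mul_sum_exp _ _ t (by positivity)
    _ ≤ exp (-(l * t)) * ((#s).choose k * exp (k * (l ^ 2 * (b - a) ^ 2 / 8))) := by
        gcongr; exact sum_powersetCard_exp_mul_sum_le s k x hx l
    _ = _ := by rw [mul_left_comm, ← exp_add, hexponent]

end Finset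

theorem stmt_19_general {V : Type*} [DecidableEq V] (d : V → V → ℝ)
    (hsymm : ∀ x y, d x y = d y x)
    (htri : ∀ x y z, d x z ≤ d x y + d y z)
    (N : Finset V) (n k : ℕ) (hn : N.card = n) (hkn : k ≤ n)
    (a c' : V) (D : ℝ) (hD : D = d a c')
    (hSC : ∑ i ∈ N, d i c' ≤ ∑ i ∈ N, d i a) :
    (((n.choose k : ℝ))⁻¹ *
        ∑ P ∈ N.powersetCard k, ((∑ i ∈ P, d i c') - ∑ i ∈ P, d i a) =
      -(((k : ℝ) / n) * ((∑ i ∈ N, d i a) - ∑ i ∈ N, d i c'))) ∧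
    (((N.powersetCard k).filter
        (fun P => ∑ i ∈ P, d i c' ≥ ∑ i ∈ P, d i a)).card : ℝ) / (n.choose k : ℝ) ≤
      Real.exp (-(2 * k * ((∑ i ∈ N, d i a) - ∑ i ∈ N, d i c') ^ 2) /
        ((n : ℝ) ^ 2 * (2 * D) ^ 2)) := by
  subst hn hD
  set x : V → ℝ := fun i => d i c' - d i a
  have hxP (P : Finset V) : ∑ i ∈ P, x i = ∑ i ∈ P, d i c' - ∑ i ∈ P, d i a := sum_sub_distrib _ _
  have hx : ∀ i ∈ N, x i ∈ Set.Icc (-d a c') (d a c') := fun i _ =>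
    ⟨by linarith [htri i c' a, hsymm a c'], by linarith [htri i a c']⟩
  constructor
  · simp_rw [← hxP]
    rw [inv_choose_mul_sum_powersetCard_sum N hkn x, hxP]
    ring
  set t := k * ((∑ i ∈ N, d i a) - ∑ i ∈ N, d i c') / #N
  have ht : 0 ≤ t := div_nonneg (mul_nonneg k.cast_nonneg (sub_nonneg.2 hSC)) (Nat.cast_nonneg _)
  have hthreshold : (k : ℝ) / #N * ∑ i ∈ N, x i + t = 0 := by
    simp only [t, hxP]; ring
  have hfilter : (N.powersetCard k).filter (fun P => k / #N * ∑ i ∈ N, x i + t ≤ ∑ i ∈ P, x i) =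
      (N.powersetCard k).filter (fun P => ∑ i ∈ P, d i c' ≥ ∑ i ∈ P, d i a) :=
    filter_congr fun P _ => by rw [hthreshold, hxP, ge_iff_le, sub_nonneg]
  have hexponent : -(2 * t ^ 2) / (k * (d a c' - -d a c') ^ 2) =
      -(2 * k * ((∑ i ∈ N, d i a) - ∑ i ∈ N, d i c') ^ 2) / ((#N : ℝ) ^ 2 * (2 * d a c') ^ 2) := by
    rcases eq_or_ne (k : ℝ) 0 with hk | hk
    · simp [t, hk]
    · simp only [t]; field_simp; ring
  have hbound := card_filter_powersetCard_le N k x hx ht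
  rw [hfilter, hexponent] at hbound
  rw [div_le_iff₀ (by exact_mod_cast Nat.choose_pos hkn), mul_comm]
  exact hbound

/-- For a uniformly random `k`-subset `P` of the agents `N`,
the variable `SC(P,c') − SC(P,a)` has expectation `−(k/n)(SC(a) − SC(c'))`,
and (for `a` with `SC(a) ≥ SC(c')`, as in the paper where `a ∉ W`)
`Pr[SC(P,c') ≥ SC(P,a)] ≤ exp(−2k(SC(a) − SC(c'))²/(n²(2D)²))`, `D = d(a,c')`. -/
theorem stmt_19 {V : Type*} [DecidableEq V] (d : V → V → ℝ)
    (hsymm : ∀ x y, d x y = d y x)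
    (htri : ∀ x y z, d x z ≤ d x y + d y z)
    (hnonneg : ∀ x y, 0 ≤ d x y)
    (N : Finset V) (n k : ℕ) (hn : N.card = n) (hkpos : 0 < k) (hkn : k ≤ n)
    (a c' : V) (D : ℝ) (hD : D = d a c')
    (hSC : ∑ i ∈ N, d i c' ≤ ∑ i ∈ N, d i a) :
    (((n.choose k : ℝ))⁻¹ *
        ∑ P ∈ N.powersetCard k, ((∑ i ∈ P, d i c') - ∑ i ∈ P, d i a) =
      -(((k : ℝ) / n) * ((∑ i ∈ N, d i a) - ∑ i ∈ N, d i c'))) ∧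
    (((N.powersetCard k).filter
        (fun P => ∑ i ∈ P, d i c' ≥ ∑ i ∈ P, d i a)).card : ℝ) / (n.choose k : ℝ) ≤
      Real.exp (-(2 * k * ((∑ i ∈ N, d i a) - ∑ i ∈ N, d i c') ^ 2) /
        ((n : ℝ) ^ 2 * (2 * D) ^ 2)) :=
  stmt_19_general d hsymm htri N n k hn hkn a c' D hD hSC
end
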